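/- arXiv:1703.00591 — 3 statements merged into one kernel-verified Lean document; each statement's English description precedes it below -/
import Mathlib

section
/- Suppose 𝒜 = {A_i}_{i=1}^m ⊂ ℝ^{n×n} is τ_n-block diagonalizable with τ_n-block diagonalizer W, so that Wᵀ A_i W = diag(A_i^{(11)},…,A_i^{(tt)}) with A_i^{(jj)} ∈ ℝ^{n_j×n_j} for all i. Let 𝒜_j = {A_i^{(jj)}}_{i=1}^m, and assume that every 𝒜_j cannot be further block diagonalized. Then 𝒜 is uniquely τ_n-block diagonalizable if and only if for all 1 ≤ j < k ≤ t the matrix M_{jk} = Σ_{i=1}^m [ I_{n_k}⊗((A_i^{(jj)})ᵀA_i^{(jj)} + A_i^{(jj)}(A_i^{(jj)})ᵀ), A_i^{(kk)}⊗A_i^{(jj)} + (A_i^{(kk)})ᵀ⊗(A_i^{(jj)})ᵀ ; A_i^{(kk)}⊗A_i^{(jj)} + (A_i^{(kk)})ᵀ⊗(A_i^{(jj)})ᵀ, ((A_i^{(kk)})ᵀA_i^{(kk)} + A_i^{(kk)}(A_i^{(kk)})ᵀ)⊗I_{n_j} ] is nonsingular. -/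
open Matrix BigOperators Kronecker
open scoped ENNReal

namespace JBD

/-- Index type for `τ_n`-block partitioned `n×n` matrices, where the partition
`τ_n = (n 0, …, n (t-1))`. -/
abbrev BlkIdx {t : ℕ} (n : Fin t → ℕ) := Σ j : Fin t, Fin (n j)

variable {t : ℕ} {n : Fin t → ℕ}

/-- The `τ_n`-block diagonal part `Bdiag_{τ_n}(A)`. -/
def bdiag (A : Matrix (BlkIdx n) (BlkIdx n) ℝ) : Matrix (BlkIdx n) (BlkIdx n) ℝ :=
  fun p q => if p.1 = q.1 then A p q else 0

/-- The `τ_n`-off-block diagonal part `OffBdiag_{τ_n}(A)`. -/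
def offBdiag (A : Matrix (BlkIdx n) (BlkIdx n) ℝ) : Matrix (BlkIdx n) (BlkIdx n) ℝ :=
  A - bdiag A

/-- `A ∈ 𝔻_{τ_n}`, i.e. `A` is `τ_n`-block diagonal. -/
def IsBlockDiag (A : Matrix (BlkIdx n) (BlkIdx n) ℝ) : Prop :=
  ∀ p q : BlkIdx n, p.1 ≠ q.1 → A p q = 0

/-- `P` is a permutation matrix. -/
def IsPermMatrix {I : Type*} [DecidableEq I] [Fintype I] (P : Matrix I I ℝ) : Prop :=
  ∃ σ : Equiv.Perm I, P = σ.permMatrix ℝ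

/-- `P ∈ ℙ_{τ_n}`: a `τ_n`-block diagonal preserving permutation matrix. -/
def IsBDPerm (P : Matrix (BlkIdx n) (BlkIdx n) ℝ) : Prop :=
  IsPermMatrix P ∧
    ∀ D : Matrix (BlkIdx n) (BlkIdx n) ℝ, IsBlockDiag D → IsBlockDiag (Pᵀ * D * P)

/-- `W ∈ 𝕎_{τ_n}`: nonsingular with `Bdiag_{τ_n}(Wᵀ W) = I`. -/
def MemW (W : Matrix (BlkIdx n) (BlkIdx n) ℝ) : Prop :=
  IsUnit W ∧ bdiag (Wᵀ * W) = 1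

/-- `W` is a `τ_n`-block diagonalizer of the matrix set `𝒜 = {A i}`. -/
def IsDiagonalizer {m : ℕ} (A : Fin m → Matrix (BlkIdx n) (BlkIdx n) ℝ)
    (W : Matrix (BlkIdx n) (BlkIdx n) ℝ) : Prop :=
  IsUnit W ∧ ∀ i, IsBlockDiag (Wᵀ * A i * W)

/-- The JBDP for `𝒜` is uniquely `τ_n`-block diagonalizable. -/
def UniquelyBD {m : ℕ} (A : Fin m → Matrix (BlkIdx n) (BlkIdx n) ℝ) : Prop :=
  (∃ W, IsDiagonalizer A W) ∧
    ∀ W W', IsDiagonalizer A W → IsDiagonalizer A W' →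
      ∃ D P : Matrix (BlkIdx n) (BlkIdx n) ℝ,
        IsBlockDiag D ∧ IsUnit D ∧ IsBDPerm P ∧ W' = W * D * P

/-- The `j`-th diagonal block of a `τ_n`-partitioned matrix. -/
def dblock (A : Matrix (BlkIdx n) (BlkIdx n) ℝ) (j : Fin t) :
    Matrix (Fin (n j)) (Fin (n j)) ℝ := fun x y => A ⟨j, x⟩ ⟨j, y⟩

/-- A family `B = {B i}` of `N×N` matrices can be (further) simultaneously block
diagonalized by congruence, with respect to some partition of `N` of cardinality `≥ 2`. -/
def CanSplit {N m : ℕ} (B : Fin m → Matrix (Fin N) (Fin N) ℝ) : Prop :=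
  ∃ (s : ℕ) (k : Fin s → ℕ), 2 ≤ s ∧ (∀ j, 0 < k j) ∧ (∑ j, k j) = N ∧
    ∃ (e : Fin N ≃ BlkIdx k) (V : Matrix (Fin N) (Fin N) ℝ), IsUnit V ∧
      ∀ i, IsBlockDiag (Matrix.reindex e e (Vᵀ * B i * V))

/-- The subspace `𝒩(ℬ) = {Z : B i * Z - Zᵀ * B i = 0 for all i}`. -/
def nSubmodule {m : ℕ} {I : Type*} [Fintype I] (B : Fin m → Matrix I I ℝ) :
    Submodule ℝ (Matrix I I ℝ) where
  carrier := {Z | ∀ i, B i * Z - Zᵀ * B i = 0}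
  add_mem' := by
    intro a b ha hb i
    have h1 := ha i
    have h2 := hb i
    have : (B i * a - aᵀ * B i) + (B i * b - bᵀ * B i) = 0 := by rw [h1, h2, add_zero]
    calc B i * (a + b) - (a + b)ᵀ * B i
        = (B i * a - aᵀ * B i) + (B i * b - bᵀ * B i) := by
          rw [Matrix.mul_add, Matrix.transpose_add, Matrix.add_mul]; abel
      _ = 0 := this
  zero_mem' := by intro i; simp
  smul_mem' := by
    intro c Z hZ i
    have h := hZ i
    calc B i * (c • Z) - (c • Z)ᵀ * B i = c • (B i * Z - Zᵀ * B i) := by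
          rw [Matrix.mul_smul, Matrix.transpose_smul, Matrix.smul_mul, smul_sub]
      _ = 0 := by rw [h, smul_zero]

/-- Frobenius norm. -/
noncomputable def frob {I J : Type*} [Fintype I] [Fintype J] (A : Matrix I J ℝ) : ℝ :=
  Real.sqrt (∑ i, ∑ j, (A i j) ^ 2)

/-- Spectral norm (operator 2-norm). -/
noncomputable def spec {I : Type*} [Fintype I] [DecidableEq I] (A : Matrix I I ℝ) : ℝ :=
  ‖Matrix.toEuclideanCLM (𝕜 := ℝ) A‖

/-- Singular values of a real matrix: square roots of the eigenvalues of `Aᵀ * A`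
(one for each column index). -/
noncomputable def sv {I J : Type*} [Fintype I] [Fintype J] [DecidableEq J]
    (A : Matrix I J ℝ) (k : J) : ℝ :=
  Real.sqrt ((show (Aᵀ * A).IsHermitian by
    simpa using Matrix.isHermitian_conjTranspose_mul_self A).eigenvalues k)

/-- The smallest singular value. -/
noncomputable def sigmaMin {I J : Type*} [Fintype I] [Fintype J] [DecidableEq J]
    (A : Matrix I J ℝ) : ℝ :=
  ⨅ k : J, sv A k

/-- The smallest nonzero singular value. -/
noncomputable def minNonzeroSV {I J : Type*} [Fintype I] [Fintype J] [DecidableEq J]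
    (A : Matrix I J ℝ) : ℝ :=
  sInf {s | (∃ k, sv A k = s) ∧ s ≠ 0}

/-- The list of singular values sorted in increasing order. -/
noncomputable def svSorted {I J : Type*} [Fintype I] [Fintype J] [DecidableEq J]
    (A : Matrix I J ℝ) : List ℝ :=
  (Finset.univ.val.map (sv A)).sort (· ≤ ·)

/-- The second smallest singular value. -/
noncomputable def secondSmallestSV {I J : Type*} [Fintype I] [Fintype J] [DecidableEq J]
    (A : Matrix I J ℝ) : ℝ :=
  (svSorted A).getD 1 0

/-- The matrix `G_{jk}` (for `j < k`), built from the diagonal blocks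
`Aj i = A_i^{(jj)}` (size `a`) and `Ak i = A_i^{(kk)}` (size `b`). -/
noncomputable def Gjk {m a b : ℕ} (Aj : Fin m → Matrix (Fin a) (Fin a) ℝ)
    (Ak : Fin m → Matrix (Fin b) (Fin b) ℝ) :
    Matrix (Fin m × ((Fin b × Fin a) ⊕ (Fin b × Fin a))) ((Fin b × Fin a) ⊕ (Fin b × Fin a)) ℝ :=
  fun r c =>
    Matrix.fromBlocks
      ((1 : Matrix (Fin b) (Fin b) ℝ) ⊗ₖ Aj r.1) ((Ak r.1)ᵀ ⊗ₖ (1 : Matrix (Fin a) (Fin a) ℝ))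
      ((1 : Matrix (Fin b) (Fin b) ℝ) ⊗ₖ (Aj r.1)ᵀ) (Ak r.1 ⊗ₖ (1 : Matrix (Fin a) (Fin a) ℝ))
      r.2 c

/-- Column-major vectorization: `vecM Z (c, r) = Z r c`. -/
def vecM {a b : ℕ} (Z : Matrix (Fin a) (Fin b) ℝ) : Fin b × Fin a → ℝ :=
  fun p => Z p.2 p.1

/-- The perfect-shuffle permutation matrix `Π_j`, satisfying
`shuffle a *ᵥ vecM Zᵀ = vecM Z`. -/
def shuffle (a : ℕ) : Matrix (Fin a × Fin a) (Fin a × Fin a) ℝ :=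
  fun p q => if q = p.swap then 1 else 0

/-- The matrix `G_{jj}`, built from the diagonal blocks `Aj i = A_i^{(jj)}` (size `a`):
its `i`-th block row is `I ⊗ Aj i - ((Aj i)ᵀ ⊗ I) * Π_j`. -/
noncomputable def Gjj {m a : ℕ} (Aj : Fin m → Matrix (Fin a) (Fin a) ℝ) :
    Matrix (Fin m × (Fin a × Fin a)) (Fin a × Fin a) ℝ :=
  fun r c =>
    ((1 : Matrix (Fin a) (Fin a) ℝ) ⊗ₖ Aj r.1
      - ((Aj r.1)ᵀ ⊗ₖ (1 : Matrix (Fin a) (Fin a) ℝ)) * shuffle a) r.2 c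

/-- The matrix `M_{jk}` from Theorem 2.1, `M_{jk} = G_{jk}ᵀ G_{jk}`. -/
noncomputable def Mjk {m a b : ℕ} (Aj : Fin m → Matrix (Fin a) (Fin a) ℝ)
    (Ak : Fin m → Matrix (Fin b) (Fin b) ℝ) :
    Matrix ((Fin b × Fin a) ⊕ (Fin b × Fin a)) ((Fin b × Fin a) ⊕ (Fin b × Fin a)) ℝ :=
  ∑ i, Matrix.fromBlocks
    ((1 : Matrix (Fin b) (Fin b) ℝ) ⊗ₖ ((Aj i)ᵀ * Aj i + Aj i * (Aj i)ᵀ))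
    (Ak i ⊗ₖ Aj i + (Ak i)ᵀ ⊗ₖ (Aj i)ᵀ)
    (Ak i ⊗ₖ Aj i + (Ak i)ᵀ ⊗ₖ (Aj i)ᵀ)
    (((Ak i)ᵀ * Ak i + Ak i * (Ak i)ᵀ) ⊗ₖ (1 : Matrix (Fin a) (Fin a) ℝ))

/-- The modulus of uniqueness `ω_uniq = min_{j<k} σ_min(G_{jk})`, in terms of the
family of diagonal blocks `Ab j i = A_i^{(jj)}`. -/
noncomputable def omegaUniq {m : ℕ}
    (Ab : ∀ j : Fin t, Fin m → Matrix (Fin (n j)) (Fin (n j)) ℝ) : ℝ :=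
  ⨅ p : {p : Fin t × Fin t // p.1 < p.2}, sigmaMin (Gjk (Ab p.1.1) (Ab p.1.2))

/-- The modulus of non-divisibility `ω_rob` (`+∞` when `τ_n = (1,…,1)`), in terms of
the family of diagonal blocks `Ab j i = A_i^{(jj)}`. -/
noncomputable def omegaRob {m : ℕ}
    (Ab : ∀ j : Fin t, Fin m → Matrix (Fin (n j)) (Fin (n j)) ℝ) : ℝ≥0∞ :=
  ⨅ (j : Fin t) (_ : 1 < n j), ENNReal.ofReal (minNonzeroSV (Gjj (Ab j)))

/-- The matrix `Γ = diag(γ_1 I_{n_1}, …, γ_t I_{n_t})`. -/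
def gmat (γ : Fin t → ℝ) : Matrix (BlkIdx n) (BlkIdx n) ℝ :=
  Matrix.diagonal (fun p => γ p.1)

/-- The gap `g = min_{j ≠ k} |γ_j - γ_k|`. -/
noncomputable def gammaGap (γ : Fin t → ℝ) : ℝ :=
  ⨅ p : {p : Fin t × Fin t // p.1 ≠ p.2}, |γ p.1.1 - γ p.1.2|

/-- The multiset of complex eigenvalues (with algebraic multiplicity) of a real
square matrix: the roots of its characteristic polynomial over `ℂ`. -/
noncomputable def eigMultiset {I : Type*} [Fintype I] [DecidableEq I]
    (Z : Matrix I I ℝ) : Multiset ℂ :=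
  (Z.map (Complex.ofReal)).charpoly.roots

/-- The `j`-th block column of `P`, with its `j`-th (diagonal) block replaced by `0`:
the matrix `P̂_j`. -/
def hatColumn (P : Matrix (BlkIdx n) (BlkIdx n) ℝ) (j : Fin t) :
    Matrix (BlkIdx n) (Fin (n j)) ℝ :=
  fun p y => if p.1 = j then 0 else P p ⟨j, y⟩

/-!
Put `B_i = Wᵀ A_i W`. The diagonalizers of `𝒜` are the matrices `W U` with `U` invertible and
every `Uᵀ B_i U` block diagonal, and uniqueness says that each such `U` is block monomial,
`U = D P` with `D ∈ 𝔻` and `P ∈ ℙ`. Since `M_jk = G_jkᵀ G_jk`, a kernel vector of `M_jk` is a pair `(X, Y)` with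
`A_i^(jj) X + Y A_i^(kk) = 0` and `A_i^(jj)ᵀ X + Y A_i^(kk)ᵀ = 0` for all `i`.

If such a pair is nonzero, the matrix `E` with blocks `X` at `(j, k)` and `Yᵀ` at `(k, j)`
satisfies `B_i E + Eᵀ B_i = 0` and `E² ∈ 𝔻`, so for `μ ≠ 0` outside the spectrum of `E` the
matrix `U = μ I - E` is invertible, keeps every `Uᵀ B_i U` block diagonal, and is not block
monomial.

Conversely, given such a `U`, the idempotents `R_k = U Π_k U⁻¹` (`Π_k` the projection onto the
`k`-th block) satisfy `B_i R_k = R_kᵀ B_i`. Their off-diagonal blocks give kernel vectors of the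
`M_jk`, so the `R_k` are block diagonal; their diagonal blocks are idempotents self-adjoint for
the unsplittable `𝒜_l`, hence `0` or `I`. So each block row of `U` meets a single block column
`f l`, and `tr R_k = tr Π_k` shows that `f` is a permutation of the blocks preserving sizes.
-/

theorem Submodule.map_eq_self_of_injective {K V : Type*} [Field K] [AddCommGroup V]
    [Module K V] {p : Submodule K V} [FiniteDimensional K p] {f : V →ₗ[K] V}
    (hf : Function.Injective f) (hp : p.map f ≤ p) : p.map f = p :=
  Submodule.eq_of_le_of_finrank_eq hp (Submodule.equivMapOfInjective f hf p).finrank_eq.symm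

section Blocks

def blk (M : Matrix (BlkIdx n) (BlkIdx n) ℝ) (j l : Fin t) : Matrix (Fin (n j)) (Fin (n l)) ℝ :=
  Matrix.of fun x y => M ⟨j, x⟩ ⟨l, y⟩

@[simp]
theorem blk_apply (M : Matrix (BlkIdx n) (BlkIdx n) ℝ) (j l : Fin t) (x y) :
    blk M j l x y = M ⟨j, x⟩ ⟨l, y⟩ := rfl

theorem blk_mul (M N : Matrix (BlkIdx n) (BlkIdx n) ℝ) (j l : Fin t) :
    blk (M * N) j l = ∑ c, blk M j c * blk N c l := by
  ext x y
  simp only [blk_apply, mul_apply, Matrix.sum_apply, ← Finset.univ_sigma_univ, Finset.sum_sigma]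

@[simp]
theorem blk_transpose (M : Matrix (BlkIdx n) (BlkIdx n) ℝ) (j l : Fin t) :
    blk Mᵀ j l = (blk M l j)ᵀ := rfl

@[simp]
theorem blk_add (M N : Matrix (BlkIdx n) (BlkIdx n) ℝ) (j l : Fin t) :
    blk (M + N) j l = blk M j l + blk N j l := rfl

@[simp]
theorem blk_zero (j l : Fin t) : blk (0 : Matrix (BlkIdx n) (BlkIdx n) ℝ) j l = 0 := rfl

@[simp]
theorem blk_one_self (j : Fin t) : blk (1 : Matrix (BlkIdx n) (BlkIdx n) ℝ) j j = 1 := by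
  ext x y
  simp [one_apply]

theorem blk_sum {ι : Type*} (s : Finset ι) (M : ι → Matrix (BlkIdx n) (BlkIdx n) ℝ)
    (j l : Fin t) : blk (∑ i ∈ s, M i) j l = ∑ i ∈ s, blk (M i) j l := by
  ext x y
  simp [Matrix.sum_apply]

theorem trace_eq_sum_trace_blk (M : Matrix (BlkIdx n) (BlkIdx n) ℝ) :
    trace M = ∑ j, trace (blk M j j) :=
  Fintype.sum_sigma _

theorem ext_blk {M N : Matrix (BlkIdx n) (BlkIdx n) ℝ} (h : ∀ j l, blk M j l = blk N j l) :
    M = N :=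
  Matrix.ext fun ⟨j, x⟩ ⟨l, y⟩ => congrFun₂ (h j l) x y

theorem isBlockDiag_iff_blk {M : Matrix (BlkIdx n) (BlkIdx n) ℝ} :
    IsBlockDiag M ↔ ∀ j l, j ≠ l → blk M j l = 0 :=
  ⟨fun h j l hjl => Matrix.ext fun x y => h ⟨j, x⟩ ⟨l, y⟩ hjl,
    fun h ⟨j, x⟩ ⟨l, y⟩ hjl => congrFun₂ (h j l hjl) x y⟩

theorem IsBlockDiag.blk_mul {M : Matrix (BlkIdx n) (BlkIdx n) ℝ} (hM : IsBlockDiag M)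
    (N : Matrix (BlkIdx n) (BlkIdx n) ℝ) (j l : Fin t) :
    blk (M * N) j l = blk M j j * blk N j l := by
  rw [JBD.blk_mul, Finset.sum_eq_single j (fun c _ hc => ?_) (by simp)]
  rw [isBlockDiag_iff_blk.1 hM j c hc.symm, Matrix.zero_mul]

theorem IsBlockDiag.blk_mul_left {N : Matrix (BlkIdx n) (BlkIdx n) ℝ} (hN : IsBlockDiag N)
    (M : Matrix (BlkIdx n) (BlkIdx n) ℝ) (j l : Fin t) :
    blk (M * N) j l = blk M j l * blk N l l := by
  rw [JBD.blk_mul, Finset.sum_eq_single l (fun c _ hc => ?_) (by simp)]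
  rw [isBlockDiag_iff_blk.1 hN c l hc, Matrix.mul_zero]

end Blocks

section BlockDiagonal

variable (n) in
def blockDiagSubmodule : Submodule ℝ (Matrix (BlkIdx n) (BlkIdx n) ℝ) where
  carrier := {M | IsBlockDiag M}
  add_mem' hM hN p q h := by simp [hM p q h, hN p q h]
  zero_mem' _ _ _ := rfl
  smul_mem' c M hM p q h := by simp [hM p q h]

theorem mem_blockDiagSubmodule {M : Matrix (BlkIdx n) (BlkIdx n) ℝ} :
    M ∈ blockDiagSubmodule n ↔ IsBlockDiag M := Iff.rfl

theorem isBlockDiag_one : IsBlockDiag (1 : Matrix (BlkIdx n) (BlkIdx n) ℝ) :=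
  fun _ _ h => one_apply_ne fun hpq => h (congrArg Sigma.fst hpq)

theorem IsBlockDiag.transpose {M : Matrix (BlkIdx n) (BlkIdx n) ℝ} (hM : IsBlockDiag M) :
    IsBlockDiag Mᵀ :=
  fun p q h => hM q p (Ne.symm h)

theorem IsBlockDiag.mul {M N : Matrix (BlkIdx n) (BlkIdx n) ℝ} (hM : IsBlockDiag M)
    (hN : IsBlockDiag N) : IsBlockDiag (M * N) := by
  intro p q h
  refine Finset.sum_eq_zero fun r _ => show M p r * N r q = 0 from ?_
  by_cases hpr : p.1 = r.1
  · rw [hN r q (hpr ▸ h), mul_zero]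
  · rw [hM p r hpr, zero_mul]

theorem IsBlockDiag.inv {D : Matrix (BlkIdx n) (BlkIdx n) ℝ} (hD : IsBlockDiag D) :
    IsBlockDiag D⁻¹ := by
  by_cases hdet : IsUnit D.det
  · have hmap : (blockDiagSubmodule n).map (LinearMap.mulLeft ℝ D) ≤ blockDiagSubmodule n := by
      rintro _ ⟨E, hE, rfl⟩
      exact hD.mul hE
    have hinj : Function.Injective (LinearMap.mulLeft ℝ D) := fun E F h => by
      simpa [← Matrix.mul_assoc, nonsing_inv_mul D hdet] using congrArg (D⁻¹ * ·) h
    obtain ⟨E, hE, hDE⟩ : (1 : Matrix (BlkIdx n) (BlkIdx n) ℝ) ∈ (blockDiagSubmodule n).map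
        (LinearMap.mulLeft ℝ D) := by
      rw [Submodule.map_eq_self_of_injective hinj hmap]
      exact isBlockDiag_one
    rwa [inv_eq_right_inv (hDE : D * E = 1)]
  · rw [nonsing_inv_apply_not_isUnit D hdet]
    exact (blockDiagSubmodule n).zero_mem

end BlockDiagonal

section BlockPermutation

theorem mul_permMatrix (M : Matrix (BlkIdx n) (BlkIdx n) ℝ) (σ : Equiv.Perm (BlkIdx n)) :
    M * σ.permMatrix ℝ = M.submatrix id σ.symm :=
  PEquiv.mul_toMatrix_toPEquiv M σ

theorem permMatrix_transpose_mul_mul (M : Matrix (BlkIdx n) (BlkIdx n) ℝ)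
    (σ : Equiv.Perm (BlkIdx n)) :
    (σ.permMatrix ℝ)ᵀ * M * σ.permMatrix ℝ = M.submatrix σ.symm σ.symm := by
  rw [mul_permMatrix, transpose_permMatrix, Equiv.Perm.permMatrix,
    PEquiv.toMatrix_toPEquiv_mul]
  rfl

theorem isBDPerm_permMatrix {σ : Equiv.Perm (BlkIdx n)}
    (hσ : ∀ a b : BlkIdx n, a.1 = b.1 → (σ a).1 = (σ b).1) : IsBDPerm (σ.permMatrix ℝ) := by
  refine ⟨⟨σ, rfl⟩, fun D hD p q hpq => ?_⟩
  rw [permMatrix_transpose_mul_mul, submatrix_apply]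
  exact hD _ _ fun h => hpq (by simpa using hσ _ _ h)

theorem IsBDPerm.mul_transpose_self {P : Matrix (BlkIdx n) (BlkIdx n) ℝ} (hP : IsBDPerm P) :
    P * Pᵀ = 1 := by
  obtain ⟨⟨σ, rfl⟩, -⟩ := hP
  rw [transpose_permMatrix, ← permMatrix_mul, inv_mul_cancel, permMatrix_one]

theorem IsBDPerm.mul_transpose_mul {P : Matrix (BlkIdx n) (BlkIdx n) ℝ} (hP : IsBDPerm P)
    (X : Matrix (BlkIdx n) (BlkIdx n) ℝ) : P * (Pᵀ * X) = X := by
  rw [← Matrix.mul_assoc, hP.mul_transpose_self, Matrix.one_mul]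

theorem isUnit_permMatrix (σ : Equiv.Perm (BlkIdx n)) : IsUnit (σ.permMatrix ℝ) := by
  rw [isUnit_iff_isUnit_det, det_permutation]
  exact (Equiv.Perm.sign σ).isUnit.map (Int.castRingHom ℝ)

theorem IsBDPerm.isUnit {P : Matrix (BlkIdx n) (BlkIdx n) ℝ} (hP : IsBDPerm P) : IsUnit P := by
  obtain ⟨⟨σ, rfl⟩, -⟩ := hP
  exact isUnit_permMatrix σ

theorem IsBDPerm.mul {P Q : Matrix (BlkIdx n) (BlkIdx n) ℝ} (hP : IsBDPerm P)
    (hQ : IsBDPerm Q) : IsBDPerm (P * Q) := by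
  obtain ⟨⟨σ, rfl⟩, hPD⟩ := hP
  obtain ⟨⟨τ, rfl⟩, hQD⟩ := hQ
  refine ⟨⟨τ * σ, (permMatrix_mul τ σ).symm⟩, fun D hD => ?_⟩
  simpa only [transpose_mul, Matrix.mul_assoc] using hQD _ (hPD D hD)

-- Conjugation by `P` maps the finite-dimensional space `𝔻_{τ_n}` injectively into itself,
-- hence onto itself, so its inverse, conjugation by `Pᵀ`, preserves `𝔻_{τ_n}` too.
theorem IsBDPerm.transpose {P : Matrix (BlkIdx n) (BlkIdx n) ℝ} (hP : IsBDPerm P) :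
    IsBDPerm Pᵀ := by
  have hPPt := hP.mul_transpose_self
  have hPPt' := hP.mul_transpose_mul
  obtain ⟨⟨σ, hσ⟩, hPD⟩ := hP
  refine ⟨⟨σ⁻¹, hσ ▸ transpose_permMatrix σ⟩, fun D hD => ?_⟩
  let f := LinearMap.mulLeft ℝ Pᵀ ∘ₗ LinearMap.mulRight ℝ P
  have hinj : Function.Injective f := fun X Y h => by
    have := congrArg (fun Z => P * Z * Pᵀ) h
    simpa [f, Matrix.mul_assoc, hPPt, hPPt'] using this
  have hmap : (blockDiagSubmodule n).map f ≤ blockDiagSubmodule n := by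
    rintro _ ⟨E, hE, rfl⟩
    simpa [f, Matrix.mul_assoc, mem_blockDiagSubmodule] using hPD E hE
  obtain ⟨E, hE, rfl⟩ : D ∈ (blockDiagSubmodule n).map f := by
    rwa [Submodule.map_eq_self_of_injective hinj hmap]
  simpa [f, Matrix.mul_assoc, hPPt, hPPt', mem_blockDiagSubmodule] using hE

end BlockPermutation

section BlockMonomial

def IsBlockMonomial (U : Matrix (BlkIdx n) (BlkIdx n) ℝ) : Prop :=
  ∃ D P : Matrix (BlkIdx n) (BlkIdx n) ℝ, IsBlockDiag D ∧ IsUnit D ∧ IsBDPerm P ∧ U = D * P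

theorem IsBlockMonomial.exists_eq_mul {U₁ U₂ : Matrix (BlkIdx n) (BlkIdx n) ℝ}
    (h₁ : IsBlockMonomial U₁) (h₂ : IsBlockMonomial U₂) :
    ∃ V, IsBlockMonomial V ∧ U₂ = U₁ * V := by
  obtain ⟨D₁, P₁, hD₁, hD₁u, hP₁, rfl⟩ := h₁
  obtain ⟨D₂, P₂, hD₂, hD₂u, hP₂, rfl⟩ := h₂
  have hdet := (isUnit_iff_isUnit_det D₁).1 hD₁u
  refine ⟨P₁ᵀ * (D₁⁻¹ * D₂) * P₁ * (P₁ᵀ * P₂),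
    ⟨_, _, hP₁.2 _ (hD₁.inv.mul hD₂), ?_, hP₁.transpose.mul hP₂, rfl⟩, ?_⟩
  · exact (hP₁.transpose.isUnit.mul ((isUnit_nonsing_inv_iff.2 hD₁u).mul hD₂u)).mul hP₁.isUnit
  · simp only [Matrix.mul_assoc, hP₁.mul_transpose_mul, mul_nonsing_inv_cancel_left D₁ _ hdet]

theorem IsBlockMonomial.isBlockDiag {U : Matrix (BlkIdx n) (BlkIdx n) ℝ}
    (hU : IsBlockMonomial U) (hdiag : ∀ p, U p p ≠ 0) : IsBlockDiag U := by
  obtain ⟨D, _, hD, -, ⟨⟨σ, rfl⟩, -⟩, rfl⟩ := hU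
  simp only [mul_permMatrix, submatrix_apply, id] at hdiag ⊢
  have hσ : ∀ q, (σ.symm q).1 = q.1 := fun q => by
    by_contra h
    exact hdiag q (hD _ _ (Ne.symm h))
  exact fun p q hpq => hD _ _ (by rwa [hσ])

theorem isDiagonalizer_mul_iff {m : ℕ} {A : Fin m → Matrix (BlkIdx n) (BlkIdx n) ℝ}
    {W : Matrix (BlkIdx n) (BlkIdx n) ℝ} (hW : IsUnit W) (U : Matrix (BlkIdx n) (BlkIdx n) ℝ) :
    IsDiagonalizer A (W * U) ↔ IsUnit U ∧ ∀ i, IsBlockDiag (Uᵀ * (Wᵀ * A i * W) * U) := by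
  simp only [IsDiagonalizer, hW.mul_left_iff, transpose_mul, Matrix.mul_assoc]

theorem uniquelyBD_iff_forall_isBlockMonomial {m : ℕ}
    {A : Fin m → Matrix (BlkIdx n) (BlkIdx n) ℝ} {W : Matrix (BlkIdx n) (BlkIdx n) ℝ}
    (hW : IsDiagonalizer A W) :
    UniquelyBD A ↔ ∀ U, IsUnit U → (∀ i, IsBlockDiag (Uᵀ * (Wᵀ * A i * W) * U)) →
      IsBlockMonomial U := by
  have hdet := (isUnit_iff_isUnit_det W).1 hW.1
  constructor
  · intro hA U hU hUA
    obtain ⟨D, P, hD, hDu, hP, hWU⟩ :=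
      hA.2 W (W * U) hW ((isDiagonalizer_mul_iff hW.1 U).2 ⟨hU, hUA⟩)
    exact ⟨D, P, hD, hDu, hP, hW.1.mul_left_cancel (by rw [hWU, Matrix.mul_assoc])⟩
  · refine fun h => ⟨⟨W, hW⟩, fun W₁ W₂ hW₁ hW₂ => ?_⟩
    rw [← mul_nonsing_inv_cancel_left W W₁ hdet] at hW₁ ⊢
    rw [← mul_nonsing_inv_cancel_left W W₂ hdet] at hW₂ ⊢
    obtain ⟨hU₁, hU₁A⟩ := (isDiagonalizer_mul_iff hW.1 _).1 hW₁
    obtain ⟨hU₂, hU₂A⟩ := (isDiagonalizer_mul_iff hW.1 _).1 hW₂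
    obtain ⟨_, ⟨D, P, hD, hDu, hP, rfl⟩, hV⟩ := (h _ hU₁ hU₁A).exists_eq_mul (h _ hU₂ hU₂A)
    exact ⟨D, P, hD, hDu, hP, by rw [hV]; simp only [Matrix.mul_assoc]⟩

end BlockMonomial

section Mjk

variable {m a b : ℕ}

def gjkBlock (Aj : Matrix (Fin a) (Fin a) ℝ) (Ak : Matrix (Fin b) (Fin b) ℝ) :
    Matrix ((Fin b × Fin a) ⊕ (Fin b × Fin a)) ((Fin b × Fin a) ⊕ (Fin b × Fin a)) ℝ :=
  fromBlocks ((1 : Matrix (Fin b) (Fin b) ℝ) ⊗ₖ Aj) (Akᵀ ⊗ₖ (1 : Matrix (Fin a) (Fin a) ℝ))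
    ((1 : Matrix (Fin b) (Fin b) ℝ) ⊗ₖ Ajᵀ) (Ak ⊗ₖ (1 : Matrix (Fin a) (Fin a) ℝ))

theorem gjkBlock_transpose_mul_self (Aj : Matrix (Fin a) (Fin a) ℝ)
    (Ak : Matrix (Fin b) (Fin b) ℝ) :
    (gjkBlock Aj Ak)ᵀ * gjkBlock Aj Ak =
      fromBlocks ((1 : Matrix (Fin b) (Fin b) ℝ) ⊗ₖ (Ajᵀ * Aj + Aj * Ajᵀ))
        (Ak ⊗ₖ Aj + Akᵀ ⊗ₖ Ajᵀ) (Ak ⊗ₖ Aj + Akᵀ ⊗ₖ Ajᵀ)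
        ((Akᵀ * Ak + Ak * Akᵀ) ⊗ₖ (1 : Matrix (Fin a) (Fin a) ℝ)) := by
  simp only [gjkBlock, fromBlocks_transpose, fromBlocks_multiply, ← kroneckerMap_transpose,
    transpose_one, transpose_transpose, ← mul_kronecker_mul, Matrix.one_mul, Matrix.mul_one,
    ← kronecker_add, ← add_kronecker]
  rw [add_comm (Ak * Akᵀ), add_comm (Akᵀ ⊗ₖ Ajᵀ)]

theorem Mjk_eq_transpose_mul_self (Aj : Fin m → Matrix (Fin a) (Fin a) ℝ)
    (Ak : Fin m → Matrix (Fin b) (Fin b) ℝ) : Mjk Aj Ak = (Gjk Aj Ak)ᵀ * Gjk Aj Ak := by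
  simp only [Mjk, ← gjkBlock_transpose_mul_self]
  ext c d
  simp only [Matrix.sum_apply, mul_apply, transpose_apply, Fintype.sum_prod_type]
  rfl

theorem gjkBlock_mulVec_vec (Aj : Matrix (Fin a) (Fin a) ℝ) (Ak : Matrix (Fin b) (Fin b) ℝ)
    (X Y : Matrix (Fin a) (Fin b) ℝ) :
    gjkBlock Aj Ak *ᵥ Sum.elim (vec X) (vec Y) =
      Sum.elim (vec (Aj * X + Y * Ak)) (vec (Ajᵀ * X + Y * Akᵀ)) := by
  simp only [gjkBlock, fromBlocks_mulVec, Sum.elim_comp_inl, Sum.elim_comp_inr,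
    kronecker_mulVec_vec, transpose_one, transpose_transpose, Matrix.mul_one, Matrix.one_mul]
  rfl

theorem Gjk_mulVec_vec_eq_zero_iff (Aj : Fin m → Matrix (Fin a) (Fin a) ℝ)
    (Ak : Fin m → Matrix (Fin b) (Fin b) ℝ) (X Y : Matrix (Fin a) (Fin b) ℝ) :
    Gjk Aj Ak *ᵥ Sum.elim (vec X) (vec Y) = 0 ↔
      ∀ i, Aj i * X + Y * Ak i = 0 ∧ (Aj i)ᵀ * X + Y * (Ak i)ᵀ = 0 := by
  have hrows : Gjk Aj Ak *ᵥ Sum.elim (vec X) (vec Y) = 0 ↔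
      ∀ i, gjkBlock (Aj i) (Ak i) *ᵥ Sum.elim (vec X) (vec Y) = 0 := by
    simp only [funext_iff, Prod.forall, Pi.zero_apply]
    rfl
  simp only [hrows, gjkBlock_mulVec_vec, ← Sum.elim_zero_zero, Sum.elim_eq_iff, vec_eq_zero_iff]

theorem isUnit_Mjk_iff (Aj : Fin m → Matrix (Fin a) (Fin a) ℝ)
    (Ak : Fin m → Matrix (Fin b) (Fin b) ℝ) :
    IsUnit (Mjk Aj Ak) ↔ ∀ X Y : Matrix (Fin a) (Fin b) ℝ,
      (∀ i, Aj i * X + Y * Ak i = 0 ∧ (Aj i)ᵀ * X + Y * (Ak i)ᵀ = 0) → X = 0 ∧ Y = 0 := by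
  have hvec : ∀ v : (Fin b × Fin a) ⊕ (Fin b × Fin a) → ℝ, ∃ X Y : Matrix (Fin a) (Fin b) ℝ,
      v = Sum.elim (vec X) (vec Y) := fun v =>
    ⟨of fun r c => v (.inl (c, r)), of fun r c => v (.inr (c, r)), by ext (_ | _) <;> rfl⟩
  rw [Mjk_eq_transpose_mul_self, ← mulVec_injective_iff_isUnit,
    ← conjTranspose_eq_transpose_of_trivial]
  change Function.Injective ((Gjk Aj Ak)ᴴ * Gjk Aj Ak).mulVecLin ↔ _
  rw [injective_iff_map_eq_zero]
  simp only [mulVecLin_apply, conjTranspose_mul_self_mulVec_eq_zero]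
  constructor
  · intro h X Y hXY
    simpa [← Sum.elim_zero_zero, Sum.elim_eq_iff, vec_eq_zero_iff] using
      h _ ((Gjk_mulVec_vec_eq_zero_iff Aj Ak X Y).2 hXY)
  · intro h v hv
    obtain ⟨X, Y, rfl⟩ := hvec v
    obtain ⟨rfl, rfl⟩ := h X Y ((Gjk_mulVec_vec_eq_zero_iff Aj Ak X Y).1 hv)
    simp

end Mjk

section Splitting

variable {N m : ℕ}

theorem canSplit_of_isInternal {s : ℕ} (B : Fin m → Matrix (Fin N) (Fin N) ℝ)
    {V : Fin s → Submodule ℝ (Fin N → ℝ)} (hV : DirectSum.IsInternal V) (hs : 2 ≤ s)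
    (hV0 : ∀ j, V j ≠ ⊥)
    (horth : ∀ j l, j ≠ l → ∀ u ∈ V j, ∀ v ∈ V l, ∀ i, u ⬝ᵥ (B i *ᵥ v) = 0) :
    CanSplit B := by
  let bb := hV.collectedBasis fun j => Module.finBasis ℝ (V j)
  let e : Fin N ≃ BlkIdx (fun j => Module.finrank ℝ (V j)) :=
    (Pi.basisFun ℝ (Fin N)).indexEquiv bb
  let C := (Pi.basisFun ℝ (Fin N)).toMatrix (bb.reindex e.symm)
  have hC : ∀ y, (fun x => C x y) = bb (e y) := fun y => by
    ext x
    simp [C, Module.Basis.toMatrix_apply]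
  refine ⟨s, _, hs, fun j => Nat.pos_of_ne_zero fun h => hV0 j (Submodule.finrank_eq_zero.1 h),
    ?_, e, C, ?_, fun i p q hpq => ?_⟩
  · simpa using (Fintype.card_congr e).symm
  · have := (Pi.basisFun ℝ (Fin N)).invertibleToMatrix (bb.reindex e.symm)
    exact isUnit_of_invertible C
  · rw [reindex_apply, submatrix_apply, Matrix.mul_assoc]
    change (fun x => C x _) ⬝ᵥ (B i *ᵥ fun x => C x _) = 0
    rw [hC, hC, e.apply_symm_apply, e.apply_symm_apply]
    exact horth _ _ hpq _ (hV.collectedBasis_mem _ p) _ (hV.collectedBasis_mem _ q) i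

theorem canSplit_of_isIdempotentElem (B : Fin m → Matrix (Fin N) (Fin N) ℝ)
    {P : Matrix (Fin N) (Fin N) ℝ} (hP : IsIdempotentElem P) (hP0 : P ≠ 0) (hP1 : P ≠ 1)
    (hB : ∀ i, B i * P = Pᵀ * B i) : CanSplit B := by
  let f := toLinAlgEquiv' P
  have hf : IsIdempotentElem f := hP.map toLinAlgEquiv'
  have hV : DirectSum.IsInternal ![LinearMap.range f, LinearMap.ker f] :=
    (DirectSum.isInternal_submodule_iff_isCompl _ (i := 0) (j := 1) (by decide)
      (by ext i; fin_cases i <;> simp)).2 (LinearMap.IsIdempotentElem.isCompl hf)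
  refine canSplit_of_isInternal B hV le_rfl (fun j => ?_) fun j l hjl u hu v hv i => ?_
  · fin_cases j
    · simpa [LinearMap.range_eq_bot, f] using hP0
    · intro hker
      refine hP1 (toLinAlgEquiv'.injective ?_)
      rw [map_one]
      exact LinearMap.ext fun x => LinearMap.ker_eq_bot.1 hker (LinearMap.congr_fun hf x)
  · fin_cases j <;> fin_cases l
    · exact absurd rfl hjl
    · obtain ⟨w, rfl⟩ := hu
      replace hv : P *ᵥ v = 0 := hv
      change (P *ᵥ w) ⬝ᵥ _ = 0
      rw [← vecMul_transpose, ← dotProduct_mulVec, mulVec_mulVec, ← hB, ← mulVec_mulVec, hv,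
        mulVec_zero, dotProduct_zero]
    · obtain ⟨w, rfl⟩ := hv
      replace hu : P *ᵥ u = 0 := hu
      change _ ⬝ᵥ (_ *ᵥ (P *ᵥ w)) = 0
      rw [mulVec_mulVec, hB, ← mulVec_mulVec, dotProduct_mulVec, vecMul_transpose, hu,
        zero_dotProduct]
    · exact absurd rfl hjl

end Splitting

section PairBlockMatrix

def pairBlockMatrix (j k : Fin t) (X : Matrix (Fin (n j)) (Fin (n k)) ℝ)
    (Y : Matrix (Fin (n k)) (Fin (n j)) ℝ) : Matrix (BlkIdx n) (BlkIdx n) ℝ :=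
  Matrix.of fun p q =>
    (Pi.single j (Pi.single k X) + Pi.single k (Pi.single j Y) :
      ∀ l l' : Fin t, Matrix (Fin (n l)) (Fin (n l')) ℝ) p.1 q.1 p.2 q.2

variable {j k : Fin t} {X : Matrix (Fin (n j)) (Fin (n k)) ℝ}
  {Y : Matrix (Fin (n k)) (Fin (n j)) ℝ}

theorem blk_pairBlockMatrix_left (hjk : j ≠ k) : blk (pairBlockMatrix j k X Y) j k = X := by
  ext x y
  simp [pairBlockMatrix, hjk]

theorem blk_pairBlockMatrix_right (hjk : j ≠ k) : blk (pairBlockMatrix j k X Y) k j = Y := by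
  ext x y
  simp [pairBlockMatrix, Ne.symm hjk]

theorem blk_pairBlockMatrix_of_ne {l l' : Fin t} (h₁ : ¬(l = j ∧ l' = k))
    (h₂ : ¬(l = k ∧ l' = j)) : blk (pairBlockMatrix j k X Y) l l' = 0 := by
  ext x y
  rcases eq_or_ne l j with rfl | hl <;> rcases eq_or_ne l k with rfl | hlk <;>
    simp_all [pairBlockMatrix]

end PairBlockMatrix

section Necessity

theorem isBlockDiag_conj_smul_one_sub {B E : Matrix (BlkIdx n) (BlkIdx n) ℝ}
    (hB : IsBlockDiag B) (hBE : B * E + Eᵀ * B = 0) (hEE : IsBlockDiag (E * E)) (μ : ℝ) :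
    IsBlockDiag ((μ • 1 - E)ᵀ * B * (μ • 1 - E)) := by
  have hconj : (μ • 1 - E)ᵀ * B * (μ • 1 - E) = μ ^ 2 • B - (E * E)ᵀ * B := by
    have hBE' : B * E = -(Eᵀ * B) := eq_neg_of_add_eq_zero_left hBE
    calc (μ • 1 - E)ᵀ * B * (μ • 1 - E)
        = μ ^ 2 • B - μ • (B * E + Eᵀ * B) + Eᵀ * (B * E) := by
          simp only [transpose_sub, transpose_smul, transpose_one, sub_mul, mul_sub, Matrix.smul_mul,
            Matrix.mul_smul, Matrix.one_mul, Matrix.mul_one, Matrix.mul_assoc]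
          module
      _ = μ ^ 2 • B - (E * E)ᵀ * B := by
          rw [hBE, hBE', transpose_mul, Matrix.mul_neg, Matrix.mul_assoc, smul_zero, sub_zero,
            sub_eq_add_neg]
  rw [hconj]
  exact (blockDiagSubmodule n).sub_mem ((blockDiagSubmodule n).smul_mem _ hB)
    (hEE.transpose.mul hB)

variable {j k : Fin t} {X : Matrix (Fin (n j)) (Fin (n k)) ℝ}
  {Y : Matrix (Fin (n k)) (Fin (n j)) ℝ}

theorem pairBlockMatrix_apply_self (hjk : j ≠ k) (p : BlkIdx n) :
    pairBlockMatrix j k X Y p p = 0 :=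
  congrFun₂ (blk_pairBlockMatrix_of_ne (fun h => hjk (h.1.symm.trans h.2))
    (fun h => hjk (h.2.symm.trans h.1))) p.2 p.2

theorem isBlockDiag_pairBlockMatrix_mul_self :
    IsBlockDiag (pairBlockMatrix j k X Y * pairBlockMatrix j k X Y) := by
  refine isBlockDiag_iff_blk.2 fun l l' hll' => ?_
  refine (blk_mul _ _ l l').trans (Finset.sum_eq_zero fun c _ => ?_)
  by_cases h : (l = j ∧ c = k) ∨ (l = k ∧ c = j)
  · rw [blk_pairBlockMatrix_of_ne (l := c) (l' := l') (by grind) (by grind), Matrix.mul_zero]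
  · rw [blk_pairBlockMatrix_of_ne (by grind) (by grind), Matrix.zero_mul]

theorem mul_pairBlockMatrix_add_transpose_mul {B : Matrix (BlkIdx n) (BlkIdx n) ℝ}
    (hB : IsBlockDiag B) (hjk : j ≠ k) (h₁ : blk B j j * X + Yᵀ * blk B k k = 0)
    (h₂ : blk B k k * Y + Xᵀ * blk B j j = 0) :
    B * pairBlockMatrix j k X Y + (pairBlockMatrix j k X Y)ᵀ * B = 0 := by
  refine ext_blk fun l l' => ?_
  rw [blk_add, hB.blk_mul, hB.blk_mul_left, blk_transpose]
  by_cases hl : l = j ∧ l' = k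
  · obtain ⟨rfl, rfl⟩ := hl
    rwa [blk_pairBlockMatrix_left hjk, blk_pairBlockMatrix_right hjk]
  by_cases hl' : l = k ∧ l' = j
  · obtain ⟨rfl, rfl⟩ := hl'
    rwa [blk_pairBlockMatrix_left hjk, blk_pairBlockMatrix_right hjk]
  rw [blk_pairBlockMatrix_of_ne hl hl', blk_pairBlockMatrix_of_ne (by tauto) (by tauto)]
  simp

theorem exists_not_isBlockMonomial_of_not_isUnit_Mjk {m : ℕ}
    {B : Fin m → Matrix (BlkIdx n) (BlkIdx n) ℝ} (hB : ∀ i, IsBlockDiag (B i)) (hjk : j ≠ k)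
    (hM : ¬IsUnit (Mjk (fun i => blk (B i) j j) (fun i => blk (B i) k k))) :
    ∃ U, IsUnit U ∧ (∀ i, IsBlockDiag (Uᵀ * B i * U)) ∧ ¬IsBlockMonomial U := by
  simp only [isUnit_Mjk_iff, not_forall] at hM
  obtain ⟨X, Y, hXY, hne⟩ := hM
  let E := pairBlockMatrix j k X Yᵀ
  obtain ⟨μ, hμ⟩ :=
    (E.finite_spectrum.union (Set.finite_singleton 0)).infinite_compl.nonempty
  simp only [Set.mem_compl_iff, Set.mem_union, Set.mem_singleton_iff, not_or] at hμ
  refine ⟨μ • 1 - E, ?_, fun i => isBlockDiag_conj_smul_one_sub (hB i) ?_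
    isBlockDiag_pairBlockMatrix_mul_self μ, fun hU => hne ?_⟩
  · simpa [Algebra.algebraMap_eq_smul_one] using spectrum.notMem_iff.1 hμ.1
  · refine mul_pairBlockMatrix_add_transpose_mul (hB i) hjk ?_ ?_
    · simpa using (hXY i).1
    · simpa [add_comm] using congrArg transpose (hXY i).2
  · have hU' := hU.isBlockDiag fun p => by simp [E, pairBlockMatrix_apply_self hjk, hμ.2]
    have hE : IsBlockDiag E := by
      simpa [mem_blockDiagSubmodule] using
        (blockDiagSubmodule n).sub_mem ((blockDiagSubmodule n).smul_mem μ isBlockDiag_one) hU'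
    rw [isBlockDiag_iff_blk] at hE
    exact ⟨by simpa [E, blk_pairBlockMatrix_left hjk] using hE j k hjk,
      by simpa [E, blk_pairBlockMatrix_right hjk] using hE k j hjk.symm⟩

end Necessity

section BlockProjection

def blockProj (k : Fin t) : Matrix (BlkIdx n) (BlkIdx n) ℝ :=
  diagonal fun p => if p.1 = k then 1 else 0

theorem isBlockDiag_blockProj (k : Fin t) : IsBlockDiag (blockProj (n := n) k) :=
  fun _ _ h => diagonal_apply_ne _ fun hpq => h (congrArg Sigma.fst hpq)

theorem blockProj_transpose (k : Fin t) : (blockProj (n := n) k)ᵀ = blockProj k :=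
  diagonal_transpose _

theorem blockProj_mul_self (k : Fin t) : blockProj (n := n) k * blockProj k = blockProj k := by
  rw [blockProj, diagonal_mul_diagonal]
  congr 1
  ext p
  split_ifs <;> simp

theorem sum_blockProj : ∑ k, blockProj (n := n) k = 1 := by
  ext p q
  rcases eq_or_ne p q with rfl | hpq
  · simp [blockProj, Matrix.sum_apply]
  · simp [blockProj, Matrix.sum_apply, hpq]

theorem trace_blockProj (k : Fin t) : trace (blockProj (n := n) k) = n k := by
  rw [blockProj, trace_diagonal, Fintype.sum_sigma]
  simp [apply_ite]

theorem blk_blockProj_self (k : Fin t) : blk (blockProj (n := n) k) k k = 1 := by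
  ext x y
  simp [blockProj, diagonal_apply, one_apply]

theorem IsBlockDiag.mul_blockProj_comm {C : Matrix (BlkIdx n) (BlkIdx n) ℝ} (hC : IsBlockDiag C)
    (k : Fin t) : C * blockProj k = blockProj k * C := by
  ext p q
  simp only [blockProj, mul_diagonal, diagonal_mul]
  by_cases hpq : p.1 = q.1
  · rw [hpq, mul_comm]
  · rw [hC p q hpq, zero_mul, mul_zero]

end BlockProjection

section Sufficiency

theorem existsUnique_eq_one_of_sum_eq_one {ι I : Type*} [Fintype ι] [Fintype I] [DecidableEq I]
    [Nonempty I] {ρ : ι → Matrix I I ℝ} (h01 : ∀ k, ρ k = 0 ∨ ρ k = 1) (hsum : ∑ k, ρ k = 1) :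
    ∃! k, ρ k = 1 := by
  classical
  obtain ⟨x⟩ := ‹Nonempty I›
  have hρ : ∑ k, ρ k = ∑ k, if ρ k = 1 then 1 else 0 :=
    Finset.sum_congr rfl fun k _ => by rcases h01 k with h | h <;> simp [h]
  rw [hρ, Finset.sum_boole] at hsum
  rw [Fintype.existsUnique_iff_card_one]
  simpa [Matrix.natCast_apply] using congrFun₂ hsum x x

theorem exists_eq_ite_of_sum_eq_one (hn : ∀ j, 0 < n j)
    {ρ : Fin t → ∀ l : Fin t, Matrix (Fin (n l)) (Fin (n l)) ℝ}
    (h01 : ∀ k l, ρ k l = 0 ∨ ρ k l = 1) (hsum : ∀ l, ∑ k, ρ k l = 1) :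
    ∃ f : Fin t → Fin t, ∀ k l, ρ k l = if f l = k then 1 else 0 := by
  have := fun l =>
    haveI := Fin.pos_iff_nonempty.1 (hn l)
    existsUnique_eq_one_of_sum_eq_one (fun k => h01 k l) (hsum l)
  choose f hf hf' using this
  refine ⟨f, fun k l => ?_⟩
  split_ifs with h
  · exact h ▸ hf l
  · exact (h01 k l).resolve_right fun h' => h (hf' l k h').symm

theorem bijective_of_forall_eq_sum_fiber (hn : ∀ j, 0 < n j) {f : Fin t → Fin t}
    (h : ∀ k, n k = ∑ l, if f l = k then n l else 0) :
    Function.Bijective f ∧ ∀ l, n (f l) = n l := by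
  have hsurj : Function.Surjective f := fun k => by
    obtain ⟨l, -, hl⟩ := Finset.exists_ne_zero_of_sum_ne_zero ((h k).symm.trans_ne (hn k).ne')
    exact ⟨l, by_contra fun h' => hl (if_neg h')⟩
  have hinj := Finite.injective_iff_surjective.2 hsurj
  refine ⟨⟨hinj, hsurj⟩, fun l => ?_⟩
  simp [h (f l), hinj.eq_iff]

theorem isBlockMonomial_of_support {U : Matrix (BlkIdx n) (BlkIdx n) ℝ} (hU : IsUnit U)
    (f : Fin t ≃ Fin t) (hf : ∀ l, n (f l) = n l) (hsupp : ∀ p q, U p q ≠ 0 → q.1 = f p.1) :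
    IsBlockMonomial U := by
  let σ : Equiv.Perm (BlkIdx n) := Equiv.sigmaCongr f fun l => finCongr (hf l).symm
  refine ⟨U.submatrix id σ, σ.permMatrix ℝ, fun p q hpq => ?_, ?_,
    isBDPerm_permMatrix fun a b h => ?_, ?_⟩
  · by_contra h
    exact hpq (f.injective (hsupp _ _ h)).symm
  · have : U.submatrix id σ = U * σ⁻¹.permMatrix ℝ := by
      rw [mul_permMatrix, Equiv.Perm.inv_def, Equiv.symm_symm]
    rw [this]
    exact hU.mul (isUnit_permMatrix _)
  · exact congrArg f h
  · rw [mul_permMatrix, submatrix_submatrix]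
    simp

theorem isBlockDiag_of_forall_mul_eq_transpose_mul {m : ℕ}
    {B : Fin m → Matrix (BlkIdx n) (BlkIdx n) ℝ} (hB : ∀ i, IsBlockDiag (B i))
    (hM : ∀ j k : Fin t, j < k → IsUnit (Mjk (fun i => blk (B i) j j) (fun i => blk (B i) k k)))
    {R : Matrix (BlkIdx n) (BlkIdx n) ℝ} (hR : ∀ i, B i * R = Rᵀ * B i) : IsBlockDiag R := by
  have hblk : ∀ i j k, blk (B i) j j * blk R j k = (blk R k j)ᵀ * blk (B i) k k := fun i j k => by
    simpa only [(hB i).blk_mul, (hB i).blk_mul_left, blk_transpose] using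
      congrArg (blk · j k) (hR i)
  have hpair : ∀ j k, j < k → blk R j k = 0 ∧ blk R k j = 0 := fun j k hjk => by
    obtain ⟨h₁, h₂⟩ := (isUnit_Mjk_iff _ _).1 (hM j k hjk) (blk R j k) (-(blk R k j)ᵀ) fun i =>
      ⟨by rw [hblk, Matrix.neg_mul, add_neg_cancel],
        by rw [Matrix.neg_mul, ← transpose_mul, hblk i k j, transpose_mul, transpose_transpose,
          add_neg_cancel]⟩
    exact ⟨h₁, by simpa using h₂⟩
  refine isBlockDiag_iff_blk.2 fun j k hjk => ?_
  rcases hjk.lt_or_gt with h | h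
  · exact (hpair j k h).1
  · exact (hpair k j h).2

variable {U : Matrix (BlkIdx n) (BlkIdx n) ℝ}

noncomputable def conjBlockProj (U : Matrix (BlkIdx n) (BlkIdx n) ℝ) (k : Fin t) :
    Matrix (BlkIdx n) (BlkIdx n) ℝ :=
  U * blockProj k * U⁻¹

theorem mul_conjBlockProj (hU : IsUnit U) {B : Matrix (BlkIdx n) (BlkIdx n) ℝ}
    (hB : IsBlockDiag (Uᵀ * B * U)) (k : Fin t) :
    B * conjBlockProj U k = (conjBlockProj U k)ᵀ * B := by
  have hdet := (isUnit_iff_isUnit_det U).1 hU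
  have hBU : B * U = (U⁻¹)ᵀ * (Uᵀ * B * U) := by
    rw [← Matrix.mul_assoc, ← Matrix.mul_assoc, ← transpose_mul, mul_nonsing_inv U hdet,
      transpose_one, Matrix.one_mul]
  calc B * (U * blockProj k * U⁻¹)
      = (U⁻¹)ᵀ * ((Uᵀ * B * U) * blockProj k) * U⁻¹ := by
        rw [← Matrix.mul_assoc, ← Matrix.mul_assoc, hBU]
        simp only [Matrix.mul_assoc]
    _ = (U⁻¹)ᵀ * blockProj k * (Uᵀ * B * U * U⁻¹) := by
        rw [hB.mul_blockProj_comm]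
        simp only [Matrix.mul_assoc]
    _ = (U * blockProj k * U⁻¹)ᵀ * B := by
        rw [mul_nonsing_inv_cancel_right _ _ hdet, transpose_mul, transpose_mul,
          blockProj_transpose]
        simp only [Matrix.mul_assoc]

theorem conjBlockProj_mul_self (hU : IsUnit U) (k : Fin t) :
    conjBlockProj U k * conjBlockProj U k = conjBlockProj U k := by
  simp only [conjBlockProj, Matrix.mul_assoc,
    nonsing_inv_mul_cancel_left _ _ ((isUnit_iff_isUnit_det U).1 hU)]
  rw [← Matrix.mul_assoc (blockProj k), blockProj_mul_self]

theorem sum_conjBlockProj (hU : IsUnit U) : ∑ k, conjBlockProj U k = 1 := by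
  simp only [conjBlockProj]
  rw [Finset.sum_congr rfl fun k _ => Matrix.mul_assoc U (blockProj k) U⁻¹, ← Finset.mul_sum,
    ← Finset.sum_mul, sum_blockProj, Matrix.one_mul,
    mul_nonsing_inv U ((isUnit_iff_isUnit_det U).1 hU)]

theorem trace_conjBlockProj (hU : IsUnit U) (k : Fin t) :
    trace (conjBlockProj U k) = (n k : ℝ) := by
  rw [conjBlockProj, trace_mul_comm,
    nonsing_inv_mul_cancel_left _ _ ((isUnit_iff_isUnit_det U).1 hU), trace_blockProj]

theorem conjBlockProj_mul (hU : IsUnit U) (k : Fin t) :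
    conjBlockProj U k * U = U * blockProj k :=
  nonsing_inv_mul_cancel_right _ _ ((isUnit_iff_isUnit_det U).1 hU)

theorem isBlockMonomial_of_isBlockDiag_conj (hn : ∀ j, 0 < n j) {m : ℕ}
    {B : Fin m → Matrix (BlkIdx n) (BlkIdx n) ℝ} (hB : ∀ i, IsBlockDiag (B i))
    (hM : ∀ j k : Fin t, j < k → IsUnit (Mjk (fun i => blk (B i) j j) (fun i => blk (B i) k k)))
    (hsplit : ∀ j, ¬CanSplit fun i => blk (B i) j j) (hU : IsUnit U)
    (hUB : ∀ i, IsBlockDiag (Uᵀ * B i * U)) : IsBlockMonomial U := by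
  have hRd : ∀ k, IsBlockDiag (conjBlockProj U k) := fun k =>
    isBlockDiag_of_forall_mul_eq_transpose_mul hB hM fun i => mul_conjBlockProj hU (hUB i) k
  have h01 : ∀ k l, blk (conjBlockProj U k) l l = 0 ∨ blk (conjBlockProj U k) l l = 1 := by
    intro k l
    by_contra! h
    refine hsplit l (canSplit_of_isIdempotentElem _ ?_ h.1 h.2 fun i => ?_)
    · rw [IsIdempotentElem, ← (hRd k).blk_mul, conjBlockProj_mul_self hU]
    · simpa only [(hB i).blk_mul, (hB i).blk_mul_left, blk_transpose] using
        congrArg (blk · l l) (mul_conjBlockProj hU (hUB i) k)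
  obtain ⟨f, hf⟩ := exists_eq_ite_of_sum_eq_one hn h01 fun l => by
    rw [← blk_sum, sum_conjBlockProj hU, blk_one_self]
  obtain ⟨hbij, hsize⟩ := bijective_of_forall_eq_sum_fiber hn (f := f) fun k => by
    have := trace_conjBlockProj hU k
    simp only [trace_eq_sum_trace_blk, hf, apply_ite trace, trace_one, trace_zero,
      Fintype.card_fin] at this
    exact_mod_cast this.symm
  refine isBlockMonomial_of_support hU (Equiv.ofBijective f hbij) hsize fun p q hpq => ?_
  by_contra hne
  have hblk := congrArg (blk · p.1 q.1) (conjBlockProj_mul hU q.1)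
  simp only [(hRd q.1).blk_mul, (isBlockDiag_blockProj q.1).blk_mul_left, blk_blockProj_self, hf,
    if_neg fun h : f p.1 = q.1 => hne h.symm, Matrix.zero_mul, Matrix.mul_one] at hblk
  exact hpq (congrFun₂ hblk.symm p.2 q.2)

end Sufficiency

/-- Theorem 2.1: characterization of unique `τ_n`-block diagonalizability
via nonsingularity of the matrices `M_{jk}`. -/
theorem uniquelyBD_iff_isUnit_Mjk {t m : ℕ} {n : Fin t → ℕ} (hn : ∀ j, 0 < n j)
    (A : Fin m → Matrix (BlkIdx n) (BlkIdx n) ℝ)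
    (W : Matrix (BlkIdx n) (BlkIdx n) ℝ) (hW : IsDiagonalizer A W)
    (Ab : ∀ j : Fin t, Fin m → Matrix (Fin (n j)) (Fin (n j)) ℝ)
    (hAb : ∀ j i, Ab j i = dblock (Wᵀ * A i * W) j)
    (hnosplit : ∀ j, ¬ CanSplit (Ab j)) :
    UniquelyBD A ↔ ∀ j k : Fin t, j < k → IsUnit (Mjk (Ab j) (Ab k)) := by
  obtain rfl : Ab = fun j i => blk (Wᵀ * A i * W) j j := funext₂ hAb
  rw [uniquelyBD_iff_forall_isBlockMonomial hW]
  constructor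
  · intro h j k hjk
    by_contra hM
    obtain ⟨U, hU, hUB, hUm⟩ := exists_not_isBlockMonomial_of_not_isUnit_Mjk hW.2 hjk.ne hM
    exact hUm (h U hU hUB)
  · exact fun hM U hU hUB => isBlockMonomial_of_isBlockDiag_conj hn hW.2 hM hnosplit hU hUB

end JBD
end

section
/- Let A_i = [[α_i, β_i],[β_i, −α_i]] ∈ ℝ^{2×2} for i = 1,…,m, where all α_i, β_i are nonzero real numbers and the ratios α_i/β_i are not all equal. Then 𝒜 = {A_i}_{i=1}^m cannot be simultaneously diagonalized by congruence (there is no nonsingular W ∈ ℝ^{2×2} with all Wᵀ A_i W diagonal), and 𝒩(𝒜) = span{I_2, [[0,1],[−1,0]]}; in particular dim 𝒩(𝒜) = 2. -/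
open Matrix BigOperators Kronecker
open scoped ENNReal

namespace JBD

variable {t : ℕ} {n : Fin t → ℕ}

/-! For `A = !![a, b; b, -a]`, both `A * Z - Zᵀ * A` and the off-diagonal entry of `Wᵀ * A * W`
are determined by a number of the form `a * u + b * v`, with `(u, v)` depending only on `Z`,
resp. `W`. Two indices with different ratios `α / β` make this `2 × 2` linear system nonsingular,
so `u = v = 0`. For `Z` this says `Z = Z 0 0 • 1 + Z 0 1 • !![0, 1; -1, 0]`; for `W` it says that the product of its columns,
read as complex numbers, vanishes, which forces `det W = 0`. -/

theorem eq_zero_of_forall_mul_add_mul_eq_zero {ι : Type*} {α β : ι → ℝ}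
    (hβ : ∀ i, β i ≠ 0) (hratio : ∃ i i', α i / β i ≠ α i' / β i') {u v : ℝ}
    (h : ∀ i, α i * u + β i * v = 0) : u = 0 ∧ v = 0 := by
  obtain ⟨i, i', hne⟩ := hratio
  have hdet : α i * β i' - α i' * β i ≠ 0 := by
    rw [sub_ne_zero]
    exact fun h => hne ((div_eq_div_iff (hβ i) (hβ i')).2 h)
  have hu : u = 0 := by
    have hu' : u * (α i * β i' - α i' * β i) = 0 := by
      linear_combination β i' * h i - β i * h i'
    exact (mul_eq_zero.1 hu').resolve_right hdet
  have hv : β i * v = 0 := by simpa [hu] using h i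
  exact ⟨hu, (mul_eq_zero.1 hv).resolve_left (hβ i)⟩

theorem mul_sub_transpose_mul_of_traceless_symm (a b : ℝ) (Z : Matrix (Fin 2) (Fin 2) ℝ) :
    !![a, b; b, -a] * Z - Zᵀ * !![a, b; b, -a] =
      (a * (Z 0 1 + Z 1 0) + b * (Z 1 1 - Z 0 0)) • !![0, 1; -1, 0] := by
  ext i j
  fin_cases i <;> fin_cases j <;>
    simp [Matrix.mul_apply, Matrix.vecMul, dotProduct, Fin.sum_univ_two] <;> ring

theorem transpose_mul_traceless_symm_mul_apply_zero_one (a b : ℝ) (W : Matrix (Fin 2) (Fin 2) ℝ) :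
    (Wᵀ * !![a, b; b, -a] * W) 0 1 =
      a * (W 0 0 * W 0 1 - W 1 0 * W 1 1) + b * (W 0 0 * W 1 1 + W 1 0 * W 0 1) := by
  simp only [Matrix.mul_apply, transpose_apply, of_apply, cons_val', cons_val_fin_one,
    Fin.sum_univ_two, cons_val_zero, cons_val_one, mul_neg]
  ring

/-- With the columns of `W` read as complex numbers `z, w`, the right-hand side is `|z w|²`
and `det W = Im (z̄ w)`. -/
theorem det_sq_le_fin_two (W : Matrix (Fin 2) (Fin 2) ℝ) :
    W.det ^ 2 ≤ (W 0 0 * W 0 1 - W 1 0 * W 1 1) ^ 2 + (W 0 0 * W 1 1 + W 1 0 * W 0 1) ^ 2 := by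
  rw [det_fin_two]
  nlinarith [sq_nonneg (W 0 0 * W 0 1 + W 1 0 * W 1 1)]

theorem mem_span_one_rot_iff (Z : Matrix (Fin 2) (Fin 2) ℝ) :
    Z ∈ Submodule.span ℝ {(1 : Matrix (Fin 2) (Fin 2) ℝ), !![0, 1; -1, 0]} ↔
      Z 0 1 + Z 1 0 = 0 ∧ Z 1 1 - Z 0 0 = 0 := by
  rw [Submodule.mem_span_pair]
  constructor
  · rintro ⟨c, d, rfl⟩
    simp
  · rintro ⟨h01, h11⟩
    refine ⟨Z 0 0, Z 0 1, ?_⟩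
    ext i j
    fin_cases i <;> fin_cases j <;> simp <;> linarith

theorem finrank_span_one_rot :
    Module.finrank ℝ
      (Submodule.span ℝ {(1 : Matrix (Fin 2) (Fin 2) ℝ), !![0, 1; -1, 0]}) = 2 := by
  have hli : LinearIndependent ℝ ![(1 : Matrix (Fin 2) (Fin 2) ℝ), !![0, 1; -1, 0]] := by
    rw [LinearIndependent.pair_iff]
    intro s t hst
    exact ⟨by simpa using congrFun (congrFun hst 0) 0, by simpa using congrFun (congrFun hst 0) 1⟩
  rw [← Matrix.range_cons_cons_empty, finrank_span_eq_card hli, Fintype.card_fin]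

section TracelessSymmFamily

variable {m : ℕ} {α β : Fin m → ℝ} {A : Fin m → Matrix (Fin 2) (Fin 2) ℝ}

theorem mem_nSubmodule_iff_of_traceless_symm (hA : ∀ i, A i = !![α i, β i; β i, -α i])
    (Z : Matrix (Fin 2) (Fin 2) ℝ) :
    Z ∈ nSubmodule A ↔ ∀ i, α i * (Z 0 1 + Z 1 0) + β i * (Z 1 1 - Z 0 0) = 0 := by
  show (∀ i, A i * Z - Zᵀ * A i = 0) ↔ _
  have hrot : (!![0, 1; -1, 0] : Matrix (Fin 2) (Fin 2) ℝ) ≠ 0 := fun h =>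
    one_ne_zero (congrFun (congrFun h 0) 1)
  simp only [hA, mul_sub_transpose_mul_of_traceless_symm, smul_eq_zero, hrot, or_false]

theorem nSubmodule_eq_span_one_rot (hβ : ∀ i, β i ≠ 0)
    (hratio : ∃ i i', α i / β i ≠ α i' / β i') (hA : ∀ i, A i = !![α i, β i; β i, -α i]) :
    nSubmodule A = Submodule.span ℝ {(1 : Matrix (Fin 2) (Fin 2) ℝ), !![0, 1; -1, 0]} := by
  ext Z
  rw [mem_nSubmodule_iff_of_traceless_symm hA, mem_span_one_rot_iff]
  constructor
  · exact eq_zero_of_forall_mul_add_mul_eq_zero hβ hratio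
  · rintro ⟨h01, h11⟩ i
    rw [h01, h11, mul_zero, mul_zero, add_zero]

theorem det_eq_zero_of_forall_isDiag (hβ : ∀ i, β i ≠ 0)
    (hratio : ∃ i i', α i / β i ≠ α i' / β i') (hA : ∀ i, A i = !![α i, β i; β i, -α i])
    {W : Matrix (Fin 2) (Fin 2) ℝ} (hW : ∀ i, (Wᵀ * A i * W).IsDiag) : W.det = 0 := by
  have hoff : ∀ i, α i * (W 0 0 * W 0 1 - W 1 0 * W 1 1) +
      β i * (W 0 0 * W 1 1 + W 1 0 * W 0 1) = 0 := fun i => by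
    rw [← transpose_mul_traceless_symm_mul_apply_zero_one, ← hA]
    exact hW i (by decide)
  obtain ⟨h₁, h₂⟩ := eq_zero_of_forall_mul_add_mul_eq_zero hβ hratio hoff
  have hsq := det_sq_le_fin_two W
  rw [h₁, h₂, zero_pow two_ne_zero, add_zero] at hsq
  exact sq_nonpos_iff _ |>.1 hsq

end TracelessSymmFamily

theorem nSubmodule_two_dim_example_general {m : ℕ} (α β : Fin m → ℝ)
    (hβ : ∀ i, β i ≠ 0)
    (hratio : ∃ i i', α i / β i ≠ α i' / β i')
    (A : Fin m → Matrix (Fin 2) (Fin 2) ℝ)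
    (hA : ∀ i, A i = !![α i, β i; β i, -α i]) :
    (¬ ∃ W : Matrix (Fin 2) (Fin 2) ℝ, IsUnit W ∧ ∀ i, (Wᵀ * A i * W).IsDiag) ∧
    nSubmodule A =
      Submodule.span ℝ {(1 : Matrix (Fin 2) (Fin 2) ℝ), !![0, 1; -1, 0]} ∧
    Module.finrank ℝ (nSubmodule A) = 2 := by
  have hspan := nSubmodule_eq_span_one_rot hβ hratio hA
  refine ⟨?_, hspan, hspan ▸ finrank_span_one_rot⟩
  rintro ⟨W, hW, hdiag⟩
  exact ((isUnit_iff_isUnit_det W).1 hW).ne_zero (det_eq_zero_of_forall_isDiag hβ hratio hA hdiag)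

/-- the family `A_i = [[α_i, β_i],[β_i, -α_i]]` with nonzero entries and
non-constant ratios `α_i/β_i` cannot be simultaneously diagonalized by congruence, and
`𝒩(𝒜) = span{I₂, [[0,1],[-1,0]]}`, which has dimension 2. -/
theorem nSubmodule_two_dim_example {m : ℕ} (α β : Fin m → ℝ)
    (hα : ∀ i, α i ≠ 0) (hβ : ∀ i, β i ≠ 0)
    (hratio : ∃ i i', α i / β i ≠ α i' / β i')
    (A : Fin m → Matrix (Fin 2) (Fin 2) ℝ)
    (hA : ∀ i, A i = !![α i, β i; β i, -α i]) :
    (¬ ∃ W : Matrix (Fin 2) (Fin 2) ℝ, IsUnit W ∧ ∀ i, (Wᵀ * A i * W).IsDiag) ∧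
    nSubmodule A =
      Submodule.span ℝ {(1 : Matrix (Fin 2) (Fin 2) ℝ), !![0, 1; -1, 0]} ∧
    Module.finrank ℝ (nSubmodule A) = 2 :=
  nSubmodule_two_dim_example_general α β hβ hratio A hA

end JBD
end

section
/- Let τ_n = (n_1,…,n_t) with t ≥ 2 and τ = (√2 − 1)/√(t−1). Let P = [P_{jk}] ∈ ℝ^{n×n} with blocks P_{jk} ∈ ℝ^{n_j×n_k}, P_{jj} = I_{n_j}, and suppose ‖P̂_j‖_F ≤ ε for all j, where P̂_j is the j-th block column of P with its j-th block replaced by zero and 0 ≤ ε < τ. Then ‖P − I_n‖_F ≤ √t · ε. Furthermore, if W, W̃ ∈ 𝕎_{τ_n}, D̃ = diag(D̃_{11},…,D̃_{tt}) ∈ 𝔻_{τ_n}, Π ∈ ℙ_{τ_n}, and W D̃ = W̃ P Π, then D̃ is nonsingular and every singular value σ of D̃ satisfies √(1 − 2√(t−1)·ε − (t−1)·ε²) ≤ σ ≤ √(1 + 2√(t−1)·ε + (t−1)·ε²). -/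
open Matrix BigOperators Kronecker
open scoped ENNReal

open WithLp

theorem Equiv.Perm.rel_apply_iff_of_finite {α : Type*} [Finite α] (σ : Equiv.Perm α)
    {r : α → α → Prop} (hr : ∀ a b, r a b → r (σ a) (σ b)) {a b : α} :
    r (σ a) (σ b) ↔ r a b := by
  refine ⟨fun h => ?_, hr a b⟩
  let f : {x : α × α // r x.1 x.2} → {x : α × α // r x.1 x.2} :=
    fun x => ⟨(σ x.1.1, σ x.1.2), hr _ _ x.2⟩
  have hf : f.Injective := by
    rintro ⟨⟨a₁, b₁⟩, _⟩ ⟨⟨a₂, b₂⟩, _⟩ h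
    simp only [f, Subtype.mk.injEq, Prod.mk.injEq, EmbeddingLike.apply_eq_iff_eq] at h
    obtain ⟨rfl, rfl⟩ := h
    rfl
  obtain ⟨⟨⟨a', b'⟩, h'⟩, hab⟩ := Finite.surjective_of_injective hf ⟨(σ a, σ b), h⟩
  simp only [f, Subtype.mk.injEq, Prod.mk.injEq, EmbeddingLike.apply_eq_iff_eq] at hab
  obtain ⟨rfl, rfl⟩ := hab
  exact h'

section EuclideanNorm

variable {I J : Type*} [Fintype I] [Fintype J]

theorem norm_toLp_sq (v : I → ℝ) : ‖toLp 2 v‖ ^ 2 = v ⬝ᵥ v := by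
  rw [EuclideanSpace.real_norm_sq_eq]
  simp [dotProduct, sq]

theorem norm_toLp_mulVec_sq (A : Matrix I J ℝ) (v : J → ℝ) :
    ‖toLp 2 (A *ᵥ v)‖ ^ 2 = v ⬝ᵥ ((Aᵀ * A) *ᵥ v) := by
  rw [norm_toLp_sq, ← Matrix.mulVec_mulVec, Matrix.dotProduct_mulVec v Aᵀ, Matrix.vecMul_transpose]

theorem isUnit_of_mul_norm_sq_le [DecidableEq I] (A : Matrix I I ℝ) {a : ℝ} (ha : 0 < a)
    (h : ∀ v, a * ‖toLp 2 v‖ ^ 2 ≤ ‖toLp 2 (A *ᵥ v)‖ ^ 2) : IsUnit A := by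
  rw [← Matrix.mulVec_injective_iff_isUnit]
  intro v w hvw
  have hvw' := h (v - w)
  rw [Matrix.mulVec_sub, hvw, sub_self, toLp_zero, norm_zero, zero_pow two_ne_zero] at hvw'
  have := nonpos_of_mul_nonpos_right hvw' ha
  rwa [sq_nonpos_iff, norm_eq_zero, toLp_eq_zero, sub_eq_zero] at this

end EuclideanNorm

theorem sq_bounds_of_abs_sub_le {d r s : ℝ} (hr : 0 ≤ r) (h : |d - r| ≤ s * r) :
    (1 - 2 * s - s ^ 2) * r ^ 2 ≤ d ^ 2 ∧ d ^ 2 ≤ (1 + 2 * s + s ^ 2) * r ^ 2 := by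
  obtain ⟨h₁, h₂⟩ := abs_le.mp h
  constructor
  · nlinarith [mul_nonneg hr hr, sq_nonneg (d - r + s * r)]
  · nlinarith

namespace JBD

section MatrixNorms

variable {I J : Type*} [Fintype I] [Fintype J]

theorem frob_sq (A : Matrix I J ℝ) : frob A ^ 2 = ∑ i, ∑ j, A i j ^ 2 :=
  Real.sq_sqrt (by positivity)

theorem norm_toLp_mulVec_le_frob (A : Matrix I J ℝ) (v : J → ℝ) :
    ‖toLp 2 (A *ᵥ v)‖ ≤ frob A * ‖toLp 2 v‖ := by
  rw [← sq_le_sq₀ (norm_nonneg _) (by unfold frob; positivity), mul_pow, frob_sq,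
    EuclideanSpace.real_norm_sq_eq, EuclideanSpace.real_norm_sq_eq, Finset.sum_mul]
  gcongr with i
  exact Finset.sum_mul_sq_le_sq_mul_sq _ _ _

theorem sqrt_le_sv_and_sv_le_sqrt [DecidableEq J] (A : Matrix I J ℝ) {a b : ℝ}
    (h : ∀ v, a * ‖toLp 2 v‖ ^ 2 ≤ ‖toLp 2 (A *ᵥ v)‖ ^ 2 ∧
      ‖toLp 2 (A *ᵥ v)‖ ^ 2 ≤ b * ‖toLp 2 v‖ ^ 2) (k : J) :
    √a ≤ sv A k ∧ sv A k ≤ √b := by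
  have hA : (Aᵀ * A).IsHermitian := by simpa using Matrix.isHermitian_conjTranspose_mul_self A
  set u := hA.eigenvectorBasis k
  have hu : ‖u‖ = 1 := hA.eigenvectorBasis.orthonormal.1 k
  have hev : hA.eigenvalues k = ‖toLp 2 (A *ᵥ u)‖ ^ 2 := by
    rw [hA.eigenvalues_eq, norm_toLp_mulVec_sq]
    simp [u]
  have := h u
  rw [toLp_ofLp, hu, one_pow, mul_one, mul_one, ← hev] at this
  exact ⟨Real.sqrt_le_sqrt this.1, Real.sqrt_le_sqrt this.2⟩

end MatrixNorms

variable {t : ℕ} {n : Fin t → ℕ}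

def SupportedOnBlock (k : Fin t) (v : BlkIdx n → ℝ) : Prop :=
  ∀ p : BlkIdx n, p.1 ≠ k → v p = 0

def blockPart (x : BlkIdx n → ℝ) (j : Fin t) : BlkIdx n → ℝ :=
  fun p => if p.1 = j then x p else 0

theorem supportedOnBlock_blockPart (x : BlkIdx n → ℝ) (j : Fin t) :
    SupportedOnBlock j (blockPart x j) :=
  fun _ hp => if_neg hp

theorem sum_blockPart (x : BlkIdx n → ℝ) : ∑ j, blockPart x j = x := by
  ext p
  simp [blockPart, Finset.sum_apply]

theorem sum_norm_sq_blockPart (x : BlkIdx n → ℝ) :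
    ∑ j, ‖toLp 2 (blockPart x j)‖ ^ 2 = ‖toLp 2 x‖ ^ 2 := by
  simp only [EuclideanSpace.real_norm_sq_eq]
  rw [Finset.sum_comm]
  refine Finset.sum_congr rfl fun p _ => ?_
  simp [blockPart, ite_pow]

theorem norm_comp_sigmaMk {k : Fin t} {v : BlkIdx n → ℝ} (hv : SupportedOnBlock k v) :
    ‖toLp 2 (v ⟨k, ·⟩)‖ = ‖toLp 2 v‖ := by
  rw [← sq_eq_sq₀ (norm_nonneg _) (norm_nonneg _), EuclideanSpace.real_norm_sq_eq,
    EuclideanSpace.real_norm_sq_eq, Fintype.sum_sigma, Finset.sum_eq_single k]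
  · exact fun j _ hj => Finset.sum_eq_zero fun y _ => by simp [hv ⟨j, y⟩ hj]
  · simp

theorem mulVec_eq_submatrix_mulVec {I : Type*} (A : Matrix I (BlkIdx n) ℝ) {k : Fin t}
    {v : BlkIdx n → ℝ} (hv : SupportedOnBlock k v) :
    A *ᵥ v = A.submatrix id (⟨k, ·⟩) *ᵥ (v ⟨k, ·⟩) := by
  ext i
  simp only [Matrix.mulVec, dotProduct, Fintype.sum_sigma]
  rw [Finset.sum_eq_single k]
  · rfl
  · exact fun j _ hj => Finset.sum_eq_zero fun y _ => by simp [hv ⟨j, y⟩ hj]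
  · simp

theorem dotProduct_bdiag_mulVec (X : Matrix (BlkIdx n) (BlkIdx n) ℝ) {k : Fin t}
    {v : BlkIdx n → ℝ} (hv : SupportedOnBlock k v) :
    v ⬝ᵥ (bdiag X *ᵥ v) = v ⬝ᵥ (X *ᵥ v) := by
  simp only [dotProduct, Matrix.mulVec, Finset.mul_sum]
  refine Finset.sum_congr rfl fun p _ => Finset.sum_congr rfl fun q _ => ?_
  by_cases hp : p.1 = k
  · by_cases hq : q.1 = k
    · simp [bdiag, hp, hq]
    · simp [hv q hq]
  · simp [hv p hp]

theorem norm_mulVec_of_bdiag_eq_one {W : Matrix (BlkIdx n) (BlkIdx n) ℝ}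
    (hW : bdiag (Wᵀ * W) = 1) {k : Fin t} {v : BlkIdx n → ℝ} (hv : SupportedOnBlock k v) :
    ‖toLp 2 (W *ᵥ v)‖ = ‖toLp 2 v‖ := by
  rw [← sq_eq_sq₀ (norm_nonneg _) (norm_nonneg _), norm_toLp_mulVec_sq,
    ← dotProduct_bdiag_mulVec _ hv, hW, Matrix.one_mulVec, norm_toLp_sq]

theorem norm_mulVec_le_of_bdiag_eq_one {W : Matrix (BlkIdx n) (BlkIdx n) ℝ}
    (hW : bdiag (Wᵀ * W) = 1) {k : Fin t} {h : BlkIdx n → ℝ} (hh : blockPart h k = 0) :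
    ‖toLp 2 (W *ᵥ h)‖ ≤ √((t : ℝ) - 1) * ‖toLp 2 h‖ := by
  set s := Finset.univ.erase k
  have hcard : (s.card : ℝ) = t - 1 := by
    rw [Finset.card_erase_of_mem (Finset.mem_univ k), Finset.card_univ, Fintype.card_fin,
      Nat.cast_pred k.pos]
  have hsum : ∑ l ∈ s, blockPart h l = h := by
    rw [Finset.sum_erase _ hh, sum_blockPart]
  have hsq : ∑ l ∈ s, ‖toLp 2 (blockPart h l)‖ ^ 2 = ‖toLp 2 h‖ ^ 2 := by
    rw [Finset.sum_erase _ (by simp [hh]), sum_norm_sq_blockPart]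
  have htriangle : ‖toLp 2 (W *ᵥ h)‖ ≤ ∑ l ∈ s, ‖toLp 2 (blockPart h l)‖ := by
    calc ‖toLp 2 (W *ᵥ h)‖ = ‖∑ l ∈ s, toLp 2 (W *ᵥ blockPart h l)‖ := by
          rw [← toLp_sum, ← Matrix.mulVec_sum, hsum]
      _ ≤ ∑ l ∈ s, ‖toLp 2 (W *ᵥ blockPart h l)‖ := norm_sum_le _ _
      _ = ∑ l ∈ s, ‖toLp 2 (blockPart h l)‖ := Finset.sum_congr rfl fun l _ =>
          norm_mulVec_of_bdiag_eq_one hW (supportedOnBlock_blockPart h l)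
  refine htriangle.trans ((sq_le_sq₀ (by positivity) (by positivity)).mp ?_)
  calc (∑ l ∈ s, ‖toLp 2 (blockPart h l)‖) ^ 2
      ≤ s.card * ∑ l ∈ s, ‖toLp 2 (blockPart h l)‖ ^ 2 := sq_sum_le_card_mul_sum_sq
    _ = (√((t : ℝ) - 1) * ‖toLp 2 h‖) ^ 2 := by
        rw [hcard, hsq, mul_pow, Real.sq_sqrt (by rw [← hcard]; positivity)]

theorem hatColumn_eq_submatrix {P : Matrix (BlkIdx n) (BlkIdx n) ℝ} (hPd : ∀ j, dblock P j = 1)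
    (j : Fin t) : hatColumn P j = (P - 1).submatrix id (⟨j, ·⟩) := by
  ext ⟨i, x⟩ y
  by_cases hij : i = j
  · subst hij
    have hP := congrFun (congrFun (hPd i) x) y
    simp only [dblock] at hP
    simp [hatColumn, hP, Matrix.one_apply]
  · simp [hatColumn, hij]

theorem frob_sub_one_sq {P : Matrix (BlkIdx n) (BlkIdx n) ℝ} (hPd : ∀ j, dblock P j = 1) :
    frob (P - 1) ^ 2 = ∑ j, frob (hatColumn P j) ^ 2 := by
  rw [frob_sq, Finset.sum_comm, Fintype.sum_sigma]
  refine Finset.sum_congr rfl fun j _ => ?_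
  rw [frob_sq, Finset.sum_comm, hatColumn_eq_submatrix hPd]
  rfl

theorem frob_sub_one_le {P : Matrix (BlkIdx n) (BlkIdx n) ℝ} (hPd : ∀ j, dblock P j = 1)
    {ε : ℝ} (hε0 : 0 ≤ ε) (hPj : ∀ j, frob (hatColumn P j) ≤ ε) :
    frob (P - 1) ≤ √(t : ℝ) * ε := by
  refine (sq_le_sq₀ (Real.sqrt_nonneg _) (by positivity)).mp ?_
  calc frob (P - 1) ^ 2 = ∑ j, frob (hatColumn P j) ^ 2 := frob_sub_one_sq hPd
    _ ≤ ∑ _j : Fin t, ε ^ 2 :=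
        Finset.sum_le_sum fun j _ => pow_le_pow_left₀ (Real.sqrt_nonneg _) (hPj j) 2
    _ = (√(t : ℝ) * ε) ^ 2 := by simp [mul_pow]

theorem blockPart_hatColumn_mulVec (P : Matrix (BlkIdx n) (BlkIdx n) ℝ) (k : Fin t)
    (w : Fin (n k) → ℝ) : blockPart (hatColumn P k *ᵥ w) k = 0 := by
  ext p
  simp +contextual [blockPart, hatColumn, Matrix.mulVec, dotProduct]

theorem abs_norm_mulVec_mulVec_sub_norm_le {W P : Matrix (BlkIdx n) (BlkIdx n) ℝ}
    (hW : bdiag (Wᵀ * W) = 1) (hPd : ∀ j, dblock P j = 1) {ε : ℝ}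
    (hPj : ∀ j, frob (hatColumn P j) ≤ ε) {k : Fin t} {v : BlkIdx n → ℝ}
    (hv : SupportedOnBlock k v) :
    |‖toLp 2 (W *ᵥ (P *ᵥ v))‖ - ‖toLp 2 v‖| ≤ √((t : ℝ) - 1) * ε * ‖toLp 2 v‖ := by
  have hPv : P *ᵥ v = v + hatColumn P k *ᵥ (v ⟨k, ·⟩) := by
    rw [hatColumn_eq_submatrix hPd, ← mulVec_eq_submatrix_mulVec _ hv, Matrix.sub_mulVec,
      Matrix.one_mulVec, add_sub_cancel]
  set h := hatColumn P k *ᵥ (v ⟨k, ·⟩)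
  calc |‖toLp 2 (W *ᵥ (P *ᵥ v))‖ - ‖toLp 2 v‖|
      = |‖toLp 2 (W *ᵥ v) + toLp 2 (W *ᵥ h)‖ - ‖toLp 2 (W *ᵥ v)‖| := by
        rw [hPv, Matrix.mulVec_add, toLp_add, norm_mulVec_of_bdiag_eq_one hW hv]
    _ ≤ ‖toLp 2 (W *ᵥ h)‖ := (abs_norm_sub_norm_le _ _).trans_eq (by rw [add_sub_cancel_left])
    _ ≤ √((t : ℝ) - 1) * ‖toLp 2 h‖ :=
        norm_mulVec_le_of_bdiag_eq_one hW (blockPart_hatColumn_mulVec P k _)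
    _ ≤ √((t : ℝ) - 1) * (ε * ‖toLp 2 v‖) := by
        gcongr
        rw [← norm_comp_sigmaMk hv]
        exact (norm_toLp_mulVec_le_frob _ _).trans (by gcongr; exact hPj k)
    _ = √((t : ℝ) - 1) * ε * ‖toLp 2 v‖ := by ring

theorem IsBDPerm.exists_eq_permMatrix {Pm : Matrix (BlkIdx n) (BlkIdx n) ℝ} (hPm : IsBDPerm Pm) :
    ∃ σ : Equiv.Perm (BlkIdx n), Pm = σ.permMatrix ℝ ∧ ∀ p q, (σ p).1 = (σ q).1 → p.1 = q.1 := by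
  obtain ⟨σ, rfl⟩ := hPm.1
  refine ⟨σ, rfl, fun p q => (σ.rel_apply_iff_of_finite (r := fun a b => a.1 = b.1) ?_).1⟩
  intro a b hab
  by_contra hne
  have hD : IsBlockDiag (Matrix.single a b (1 : ℝ)) := fun p q hpq => by
    simp only [Matrix.single_apply]
    rw [if_neg]
    rintro ⟨rfl, rfl⟩
    exact hpq hab
  have := hPm.2 _ hD (σ a) (σ b) hne
  simp [Matrix.transpose_permMatrix, Equiv.Perm.permMatrix, PEquiv.toMatrix_toPEquiv_mul,
    PEquiv.mul_toMatrix_toPEquiv] at this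

theorem SupportedOnBlock.exists_comp {σ : Equiv.Perm (BlkIdx n)}
    (hσ : ∀ p q, (σ p).1 = (σ q).1 → p.1 = q.1) {j : Fin t} {x : BlkIdx n → ℝ}
    (hx : SupportedOnBlock j x) : ∃ k, SupportedOnBlock k (x ∘ σ) := by
  by_cases h : ∃ p₀, (σ p₀).1 = j
  · obtain ⟨p₀, hp₀⟩ := h
    exact ⟨p₀.1, fun p hp => hx _ fun hpj => hp (hσ p p₀ (hpj.trans hp₀.symm))⟩
  · push Not at h
    exact ⟨j, fun p _ => hx _ (h p)⟩

theorem IsBlockDiag.supportedOnBlock_mulVec {D : Matrix (BlkIdx n) (BlkIdx n) ℝ}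
    (hD : IsBlockDiag D) {j : Fin t} {x : BlkIdx n → ℝ} (hx : SupportedOnBlock j x) :
    SupportedOnBlock j (D *ᵥ x) := fun p hp =>
  Finset.sum_eq_zero fun q _ => by
    by_cases hq : q.1 = j
    · simp [hD p q (hq ▸ hp)]
    · simp [hx q hq]

theorem IsBlockDiag.blockPart_mulVec {D : Matrix (BlkIdx n) (BlkIdx n) ℝ} (hD : IsBlockDiag D)
    (x : BlkIdx n → ℝ) (j : Fin t) : blockPart (D *ᵥ x) j = D *ᵥ blockPart x j := by
  ext p
  by_cases hp : p.1 = j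
  · refine (if_pos hp).trans (Finset.sum_congr rfl fun q _ => ?_)
    by_cases hq : q.1 = j
    · simp [blockPart, hq]
    · simp [blockPart, hq, hD p q fun hpq => hq (hpq.symm.trans hp)]
  · exact (if_neg hp).trans (hD.supportedOnBlock_mulVec (supportedOnBlock_blockPart x j) p hp).symm

theorem IsBlockDiag.norm_mulVec_sq_bounds {D : Matrix (BlkIdx n) (BlkIdx n) ℝ}
    (hD : IsBlockDiag D) {a b : ℝ}
    (h : ∀ j x, SupportedOnBlock j x → a * ‖toLp 2 x‖ ^ 2 ≤ ‖toLp 2 (D *ᵥ x)‖ ^ 2 ∧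
      ‖toLp 2 (D *ᵥ x)‖ ^ 2 ≤ b * ‖toLp 2 x‖ ^ 2) (x : BlkIdx n → ℝ) :
    a * ‖toLp 2 x‖ ^ 2 ≤ ‖toLp 2 (D *ᵥ x)‖ ^ 2 ∧
      ‖toLp 2 (D *ᵥ x)‖ ^ 2 ≤ b * ‖toLp 2 x‖ ^ 2 := by
  have hblocks : ‖toLp 2 (D *ᵥ x)‖ ^ 2 = ∑ j, ‖toLp 2 (D *ᵥ blockPart x j)‖ ^ 2 := by
    simp only [← sum_norm_sq_blockPart (D *ᵥ x), hD.blockPart_mulVec]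
  rw [hblocks, ← sum_norm_sq_blockPart x, Finset.mul_sum, Finset.mul_sum]
  exact ⟨Finset.sum_le_sum fun j _ => (h j _ (supportedOnBlock_blockPart x j)).1,
    Finset.sum_le_sum fun j _ => (h j _ (supportedOnBlock_blockPart x j)).2⟩

theorem abs_norm_mulVec_sub_norm_le_of_eq {W Wt Dt Pm P : Matrix (BlkIdx n) (BlkIdx n) ℝ}
    (hW : bdiag (Wᵀ * W) = 1) (hWt : bdiag (Wtᵀ * Wt) = 1) (hDt : IsBlockDiag Dt)
    (hPm : IsBDPerm Pm) (hPd : ∀ j, dblock P j = 1) {ε : ℝ} (hPj : ∀ j, frob (hatColumn P j) ≤ ε)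
    (hEq : W * Dt = Wt * P * Pm) {j : Fin t} {x : BlkIdx n → ℝ} (hx : SupportedOnBlock j x) :
    |‖toLp 2 (Dt *ᵥ x)‖ - ‖toLp 2 x‖| ≤ √((t : ℝ) - 1) * ε * ‖toLp 2 x‖ := by
  obtain ⟨σ, rfl, hσ⟩ := hPm.exists_eq_permMatrix
  obtain ⟨k, hk⟩ := hx.exists_comp hσ
  have hnorm : ‖toLp 2 (x ∘ σ)‖ = ‖toLp 2 x‖ := by
    rw [← sq_eq_sq₀ (norm_nonneg _) (norm_nonneg _), EuclideanSpace.real_norm_sq_eq,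
      EuclideanSpace.real_norm_sq_eq]
    exact Equiv.sum_comp σ (fun p => x p ^ 2)
  have hWDt : W *ᵥ (Dt *ᵥ x) = Wt *ᵥ (P *ᵥ (x ∘ σ)) := by
    rw [← Matrix.permMatrix_mulVec, Matrix.mulVec_mulVec, Matrix.mulVec_mulVec,
      Matrix.mulVec_mulVec, hEq]
  rw [← norm_mulVec_of_bdiag_eq_one hW (hDt.supportedOnBlock_mulVec hx), hWDt, ← hnorm]
  exact abs_norm_mulVec_mulVec_sub_norm_le hWt hPd hPj hk

theorem lemma_three_general {t : ℕ} {n : Fin t → ℕ}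
    (τv : ℝ) (hτ : τv = (Real.sqrt 2 - 1) / Real.sqrt ((t : ℝ) - 1))
    (P : Matrix (BlkIdx n) (BlkIdx n) ℝ) (hPd : ∀ j, dblock P j = 1)
    (ε : ℝ) (hε0 : 0 ≤ ε) (hετ : ε < τv)
    (hPj : ∀ j, frob (hatColumn P j) ≤ ε) :
    frob (P - 1) ≤ Real.sqrt (t : ℝ) * ε ∧
    ∀ (W Wt Dt Pm : Matrix (BlkIdx n) (BlkIdx n) ℝ),
      MemW W → MemW Wt → IsBlockDiag Dt → IsBDPerm Pm →
      W * Dt = Wt * P * Pm →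
      IsUnit Dt ∧
        ∀ k : BlkIdx n,
          Real.sqrt (1 - 2 * Real.sqrt ((t : ℝ) - 1) * ε - ((t : ℝ) - 1) * ε ^ 2) ≤ sv Dt k ∧
          sv Dt k ≤ Real.sqrt (1 + 2 * Real.sqrt ((t : ℝ) - 1) * ε + ((t : ℝ) - 1) * ε ^ 2) := by
  refine ⟨frob_sub_one_le hPd hε0 hPj, fun W Wt Dt Pm hW hWt hDt hPm hEq => ?_⟩
  -- `√(t - 1) = 0` would give `τ = 0` (division by zero), contradicting `0 ≤ ε < τ`.
  have hsqrt : 0 < √((t : ℝ) - 1) := by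
    have h2 : 0 < √2 - 1 := by simp [Real.lt_sqrt]
    simpa [hτ, div_pos_iff_of_pos_left h2] using hε0.trans_lt hετ
  simp only [mul_assoc (2 : ℝ)]
  set s := √((t : ℝ) - 1) * ε
  have hs : s < √2 - 1 := (lt_div_iff₀' hsqrt).mp (hτ ▸ hετ)
  have hss : ((t : ℝ) - 1) * ε ^ 2 = s ^ 2 := by
    rw [mul_pow, Real.sq_sqrt (Real.sqrt_pos.mp hsqrt).le]
  have hbounds := hDt.norm_mulVec_sq_bounds fun j x hx =>
    sq_bounds_of_abs_sub_le (norm_nonneg _)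
      (abs_norm_mulVec_sub_norm_le_of_eq hW.2 hWt.2 hDt hPm hPd hPj hEq hx)
  rw [hss]
  refine ⟨isUnit_of_mul_norm_sq_le Dt ?_ fun x => (hbounds x).1,
    sqrt_le_sv_and_sv_le_sqrt Dt hbounds⟩
  nlinarith [Real.sq_sqrt zero_le_two, mul_nonneg hsqrt.le hε0]

/-- Lemma 4.3. -/
theorem lemma_three {t : ℕ} {n : Fin t → ℕ} (ht : 2 ≤ t) (hn : ∀ j, 0 < n j)
    (τv : ℝ) (hτ : τv = (Real.sqrt 2 - 1) / Real.sqrt ((t : ℝ) - 1))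
    (P : Matrix (BlkIdx n) (BlkIdx n) ℝ) (hPd : ∀ j, dblock P j = 1)
    (ε : ℝ) (hε0 : 0 ≤ ε) (hετ : ε < τv)
    (hPj : ∀ j, frob (hatColumn P j) ≤ ε) :
    frob (P - 1) ≤ Real.sqrt (t : ℝ) * ε ∧
    ∀ (W Wt Dt Pm : Matrix (BlkIdx n) (BlkIdx n) ℝ),
      MemW W → MemW Wt → IsBlockDiag Dt → IsBDPerm Pm →
      W * Dt = Wt * P * Pm →
      IsUnit Dt ∧
        ∀ k : BlkIdx n,
          Real.sqrt (1 - 2 * Real.sqrt ((t : ℝ) - 1) * ε - ((t : ℝ) - 1) * ε ^ 2) ≤ sv Dt k ∧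
          sv Dt k ≤ Real.sqrt (1 + 2 * Real.sqrt ((t : ℝ) - 1) * ε + ((t : ℝ) - 1) * ε ^ 2) :=
  lemma_three_general τv hτ P hPd ε hε0 hετ hPj

end JBD
end
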